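/- arXiv:1607.02888 — 5 statements merged into one kernel-verified Lean document; each statement's English description precedes it below -/
import Mathlib

section
/- Let K be a convex body in ℝ^d such that K is smooth at every boundary point lying on a supporting hyperplane of K parallel to a coordinate hyperplane; that is, for every p ∈ K and every standard basis vector e_j, if ⟨p, e_j⟩ = max_{q ∈ K} ⟨q, e_j⟩ or ⟨p, e_j⟩ = min_{q ∈ K} ⟨q, e_j⟩, then K has a unique supporting hyperplane at p. Let (λ_i)_{i≥1} be positive real numbers with sup_i λ_i = ∞. Then there exist translation vectors x_i ∈ ℝ^d such that ℝ^d = ∪_i (x_i + λ_i K) and every point of ℝ^d belongs to x_i + λ_i K for at most 2d indices i. -/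
open MeasureTheory Filter Pointwise Set
open scoped ENNReal RealInnerProductSpace

/-- `v` is the outer normal of a hyperplane supporting `K` at `p`. -/
def IsSupportHypAt {d : ℕ} (K : Set (EuclideanSpace ℝ (Fin d)))
    (p v : EuclideanSpace ℝ (Fin d)) : Prop :=
  v ≠ 0 ∧ ∀ q ∈ K, ⟪q, v⟫ ≤ ⟪p, v⟫

/-- `K` is smooth at `p`: any two hyperplanes supporting `K` at `p` coincide (as sets). -/
def SmoothBdryAt {d : ℕ} (K : Set (EuclideanSpace ℝ (Fin d)))
    (p : EuclideanSpace ℝ (Fin d)) : Prop :=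
  ∀ v w : EuclideanSpace ℝ (Fin d), IsSupportHypAt K p v → IsSupportHypAt K p w →
    {y : EuclideanSpace ℝ (Fin d) | ⟪y, v⟫ = ⟪p, v⟫} =
      {y : EuclideanSpace ℝ (Fin d) | ⟪y, w⟫ = ⟪p, w⟫}

variable {d : ℕ}

lemma coord_abs_le_norm (x : EuclideanSpace ℝ (Fin d)) (j : Fin d) : |x j| ≤ ‖x‖ := by
  have h := EuclideanSpace.norm_eq x
  rw [h]
  have : |x j| = Real.sqrt (‖x j‖^2) := by
    rw [Real.sqrt_sq_eq_abs]; simp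
  rw [this]
  apply Real.sqrt_le_sqrt
  exact Finset.single_le_sum (f := fun i => ‖x i‖^2) (fun i _ => sq_nonneg _) (Finset.mem_univ j)

lemma norm_le_card_mul (x : EuclideanSpace ℝ (Fin d)) (c : ℝ) (hc : 0 ≤ c)
    (h : ∀ j, |x j| ≤ c) : ‖x‖ ≤ d * c := by
  rw [EuclideanSpace.norm_eq]
  have h1 : ∑ i, ‖x i‖^2 ≤ ∑ _i : Fin d, c^2 := by
    apply Finset.sum_le_sum
    intro i _
    have := h i
    rw [Real.norm_eq_abs]
    nlinarith [abs_nonneg (x i)]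
  calc Real.sqrt (∑ i, ‖x i‖^2) ≤ Real.sqrt (∑ _i : Fin d, c^2) := Real.sqrt_le_sqrt h1
    _ = Real.sqrt (d * c^2) := by simp [mul_comm]
    _ ≤ Real.sqrt ((d*c)^2) := by
        apply Real.sqrt_le_sqrt
        have hdd : (d:ℝ) ≤ (d:ℝ)^2 := by exact_mod_cast Nat.le_self_pow two_ne_zero d
        nlinarith [sq_nonneg c, Nat.cast_nonneg (α := ℝ) d]
    _ = d * c := by rw [Real.sqrt_sq (by positivity)]

lemma pyramid (K : Set (EuclideanSpace ℝ (Fin d)))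
    (hKcomp : IsCompact K) (hKconv : Convex ℝ K) (hKint : (interior K).Nonempty)
    (hsmooth : ∀ p ∈ K, ∀ j : Fin d,
      (IsMaxOn (fun q : EuclideanSpace ℝ (Fin d) => ⟪q, EuclideanSpace.single j (1:ℝ)⟫) K p ∨
       IsMinOn (fun q : EuclideanSpace ℝ (Fin d) => ⟪q, EuclideanSpace.single j (1:ℝ)⟫) K p) →
      SmoothBdryAt K p)
    (j : Fin d) (σ : ℝ) (hσ : σ = 1 ∨ σ = -1) :
    ∃ p ∈ K, ∃ T : ℝ, 0 < T ∧ (∀ q ∈ K, σ * p j ≤ σ * q j) ∧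
      ∀ y : EuclideanSpace ℝ (Fin d), 0 < σ * (y j - p j) → σ * (y j - p j) ≤ T →
        (∀ i, i ≠ j → |y i - p i| ≤ 2 * (σ * (y j - p j))) → y ∈ K := by
  obtain ⟨z, hz⟩ := hKint
  have hKne : K.Nonempty := ⟨z, interior_subset hz⟩
  have hσ1 : |σ| = 1 := by rcases hσ with h | h <;> simp [h]
  have hσ0 : σ ≠ 0 := by rcases hσ with h | h <;> simp [h]
  have hσsq : σ * σ = 1 := by rcases hσ with h | h <;> rw [h] <;> norm_num
  have hcont : Continuous (fun q : EuclideanSpace ℝ (Fin d) => σ * q j) := by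
    fun_prop
  obtain ⟨p, hpK, hp⟩ := hKcomp.exists_isMinOn hKne hcont.continuousOn
  rw [isMinOn_iff] at hp
  refine ⟨p, hpK, ?_⟩
  by_contra hcon
  push_neg at hcon
  -- a sequence of bad points
  have hbad : ∀ n : ℕ, ∃ y : EuclideanSpace ℝ (Fin d),
      0 < σ * (y j - p j) ∧ σ * (y j - p j) ≤ 1/(n+1) ∧
      (∀ i, i ≠ j → |y i - p i| ≤ 2 * (σ * (y j - p j))) ∧ y ∉ K := by
    intro n
    obtain ⟨y, h1, h2, h3, h4⟩ := hcon (1/(n+1)) (by positivity) hp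
    exact ⟨y, h1, h2, h3, h4⟩
  choose y hy1 hy2 hy3 hy4 using hbad
  set t : ℕ → ℝ := fun n => σ * (y n j - p j) with ht
  -- y n tends to p
  have hnorm : ∀ n, ‖y n - p‖ ≤ d * (2 * t n) := by
    intro n
    apply norm_le_card_mul _ _ (by have := hy1 n; positivity)
    intro i
    by_cases hij : i = j
    · subst hij
      have : |y n i - p i| = |σ * (y n i - p i)| := by rw [abs_mul, hσ1, one_mul]
      rw [show (y n - p) i = y n i - p i by simp, this, abs_of_pos (hy1 n)]
      have h1 := hy1 n
      have h2 : t n = σ * (y n i - p i) := rfl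
      linarith
    · rw [show (y n - p) i = y n i - p i by simp]
      exact hy3 n i hij
  have hyt : Tendsto (fun n => y n) atTop (nhds p) := by
    rw [tendsto_iff_norm_sub_tendsto_zero]
    have h0 : Tendsto (fun n : ℕ => (d:ℝ) * (2 * (1/(n+1)))) atTop (nhds 0) := by
      have := tendsto_one_div_add_atTop_nhds_zero_nat (𝕜 := ℝ)
      have h2 := this.const_mul ((d:ℝ) * 2)
      simpa [mul_assoc] using h2
    apply squeeze_zero (fun n => norm_nonneg _) (fun n => ?_) h0
    calc ‖y n - p‖ ≤ d * (2 * t n) := hnorm n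
      _ ≤ d * (2 * (1/(n+1))) := by
          have h1 := hy2 n
          have h2 : t n = σ * (y n j - p j) := rfl
          have hd0 : (0:ℝ) ≤ d := Nat.cast_nonneg d
          nlinarith
  -- separating normals
  have hsep : ∀ n, ∃ w : EuclideanSpace ℝ (Fin d),
      ‖w‖ = 1 ∧ ∀ q ∈ K, ⟪w, q⟫ ≤ ⟪w, y n⟫ := by
    intro n
    obtain ⟨f, u, hfu, huf⟩ := geometric_hahn_banach_closed_point hKconv hKcomp.isClosed (hy4 n)
    set w0 := (InnerProductSpace.toDual ℝ (EuclideanSpace ℝ (Fin d))).symm f with hw0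
    have hw0app : ∀ v, ⟪w0, v⟫ = f v := by
      intro v; rw [hw0]; exact InnerProductSpace.toDual_symm_apply
    have hw00 : w0 ≠ 0 := by
      intro h
      have h1 := hfu p hpK
      have h2 : f p = ⟪w0, p⟫ := (hw0app p).symm
      have h3 : f (y n) = ⟪w0, y n⟫ := (hw0app (y n)).symm
      rw [h] at h2 h3
      simp [inner_zero_left] at h2 h3
      rw [h2] at h1; rw [h3] at huf; linarith
    refine ⟨‖w0‖⁻¹ • w0, ?_, ?_⟩
    · rw [norm_smul]; simp [norm_ne_zero_iff.mpr hw00]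
    · intro q hq
      rw [real_inner_smul_left, real_inner_smul_left]
      have h1 : f q < u := hfu q hq
      have h2 : u < f (y n) := huf
      rw [← hw0app q, ← hw0app (y n)] at *
      have hn0 : 0 < ‖w0‖ := norm_pos_iff.mpr hw00
      have hpos : 0 < ‖w0‖⁻¹ := by positivity
      nlinarith [hfu q hq, huf]
  choose w hw1 hw2 using hsep
  have hsph : ∀ n, w n ∈ Metric.sphere (0 : EuclideanSpace ℝ (Fin d)) 1 := by
    intro n; simpa [mem_sphere_zero_iff_norm] using hw1 n
  obtain ⟨wl, hwl, φ, hφ, hconv⟩ :=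
    (isCompact_sphere (0 : EuclideanSpace ℝ (Fin d)) 1).tendsto_subseq hsph
  have hwl1 : ‖wl‖ = 1 := by simpa [mem_sphere_zero_iff_norm] using hwl
  have hwl0 : wl ≠ 0 := by intro h; rw [h] at hwl1; simp at hwl1
  have hsupp : ∀ q ∈ K, ⟪wl, q⟫ ≤ ⟪wl, p⟫ := by
    intro q hq
    have h1 : Tendsto (fun n => ⟪w (φ n), q⟫) atTop (nhds ⟪wl, q⟫) :=
      hconv.inner tendsto_const_nhds
    have h2 : Tendsto (fun n => ⟪w (φ n), y (φ n)⟫) atTop (nhds ⟪wl, p⟫) :=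
      hconv.inner (hyt.comp hφ.tendsto_atTop)
    exact le_of_tendsto_of_tendsto' h1 h2 (fun n => hw2 (φ n) q hq)
  have hsuppA : IsSupportHypAt K p wl :=
    ⟨hwl0, fun q hq => by
      rw [real_inner_comm wl q, real_inner_comm wl p]; exact hsupp q hq⟩
  set u0 : EuclideanSpace ℝ (Fin d) := (-σ) • EuclideanSpace.single j 1 with hu0
  have hu0j : ∀ v : EuclideanSpace ℝ (Fin d), ⟪v, u0⟫ = -σ * v j := by
    intro v; rw [hu0, inner_smul_right, EuclideanSpace.inner_single_right]
    simp only [starRingEnd_apply, star_trivial]; ring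
  have hu00 : u0 ≠ 0 := by
    intro h
    have h2 : u0 j = -σ := by rw [hu0]; simp [EuclideanSpace.single_apply]
    rw [h] at h2
    have : σ = 0 := by
      have : (0 : EuclideanSpace ℝ (Fin d)) j = 0 := rfl
      rw [this] at h2; linarith
    exact hσ0 this
  have hsuppB : IsSupportHypAt K p u0 :=
    ⟨hu00, fun q hq => by rw [hu0j, hu0j]; have := hp q hq; linarith⟩
  have hin : ∀ v : EuclideanSpace ℝ (Fin d),
      ⟪v, EuclideanSpace.single j (1:ℝ)⟫ = v j := by
    intro v; rw [EuclideanSpace.inner_single_right]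
    simp only [starRingEnd_apply, star_trivial]; ring
  have hminmax : (IsMaxOn (fun q : EuclideanSpace ℝ (Fin d) =>
        ⟪q, EuclideanSpace.single j (1:ℝ)⟫) K p ∨
      IsMinOn (fun q : EuclideanSpace ℝ (Fin d) =>
        ⟪q, EuclideanSpace.single j (1:ℝ)⟫) K p) := by
    rcases hσ with h | h
    · right; rw [isMinOn_iff]; intro x hx
      rw [hin, hin]; have := hp x hx; rw [h] at this; linarith
    · left; rw [isMaxOn_iff]; intro x hx
      rw [hin, hin]; have := hp x hx; rw [h] at this; linarith
  have heq := hsmooth p hpK j hminmax wl u0 hsuppA hsuppB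
  have hwi : ∀ i, i ≠ j → wl i = 0 := by
    intro i hij
    have hmem : (p + EuclideanSpace.single i (1:ℝ)) ∈
        {y : EuclideanSpace ℝ (Fin d) | ⟪y, u0⟫ = ⟪p, u0⟫} := by
      simp only [Set.mem_setOf_eq, hu0j]
      have h2 : (p + EuclideanSpace.single i (1:ℝ)) j = p j := by
        have : (p + EuclideanSpace.single i (1:ℝ)) j = p j + (EuclideanSpace.single i (1:ℝ)) j := by
          simp
        rw [this, EuclideanSpace.single_apply]
        simp [Ne.symm hij]
      rw [h2]
    rw [← heq] at hmem
    simp only [Set.mem_setOf_eq] at hmem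
    rw [inner_add_left] at hmem
    have h1 : ⟪EuclideanSpace.single i (1:ℝ), wl⟫ = wl i := by
      rw [EuclideanSpace.inner_single_left]; simp
    have h0 : ⟪EuclideanSpace.single i (1:ℝ), wl⟫ = 0 := by linarith
    rwa [h1] at h0
  have hwj : |wl j| = 1 := by
    have hne := EuclideanSpace.norm_eq wl
    rw [hwl1] at hne
    have hsum : ∑ i, ‖wl i‖^2 = ‖wl j‖^2 := by
      apply Finset.sum_eq_single j
      · intro i _ hij; rw [hwi i hij]; simp
      · intro h; exact absurd (Finset.mem_univ j) h
    rw [hsum, Real.sqrt_sq (norm_nonneg _)] at hne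
    rw [← Real.norm_eq_abs]; exact hne.symm
  have hsign : 0 ≤ σ * wl j := by
    have key : ∀ n, 0 ≤ σ * w n j + 2 * ∑ i ∈ Finset.univ.erase j, |w n i| := by
      intro n
      have hinner : (0:ℝ) ≤ ⟪w n, y n - p⟫ := by
        have := hw2 n p hpK
        rw [inner_sub_right]; linarith
      have hexp : ⟪w n, y n - p⟫ = ∑ i, w n i * (y n i - p i) := by
        rw [PiLp.inner_apply]
        apply Finset.sum_congr rfl
        intro i _
        simp [RCLike.inner_apply]
        ring
      have hsplit : ∑ i, w n i * (y n i - p i) =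
          w n j * (y n j - p j) + ∑ i ∈ Finset.univ.erase j, w n i * (y n i - p i) := by
        rw [← Finset.add_sum_erase _ _ (Finset.mem_univ j)]
      have hS : |∑ i ∈ Finset.univ.erase j, w n i * (y n i - p i)| ≤
          (∑ i ∈ Finset.univ.erase j, |w n i|) * (2 * t n) := by
        calc |∑ i ∈ Finset.univ.erase j, w n i * (y n i - p i)|
            ≤ ∑ i ∈ Finset.univ.erase j, |w n i * (y n i - p i)| :=
              Finset.abs_sum_le_sum_abs _ _
          _ ≤ ∑ i ∈ Finset.univ.erase j, |w n i| * (2 * t n) := by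
              apply Finset.sum_le_sum
              intro i hi
              rw [abs_mul]
              exact mul_le_mul_of_nonneg_left (hy3 n i (Finset.ne_of_mem_erase hi)) (abs_nonneg _)
          _ = (∑ i ∈ Finset.univ.erase j, |w n i|) * (2 * t n) := by
              rw [← Finset.sum_mul]
      have hyj : y n j - p j = σ * t n := by
        have : t n = σ * (y n j - p j) := rfl
        rw [this]; rw [← mul_assoc, hσsq, one_mul]
      have ht0 : 0 < t n := hy1 n
      have hfin : 0 ≤ t n * (σ * w n j + 2 * ∑ i ∈ Finset.univ.erase j, |w n i|) := by
        have h1 : 0 ≤ w n j * (σ * t n) + ∑ i ∈ Finset.univ.erase j, w n i * (y n i - p i) := by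
          rw [← hyj, ← hsplit, ← hexp]; exact hinner
        have h3 := le_abs_self (∑ i ∈ Finset.univ.erase j, w n i * (y n i - p i))
        nlinarith [hS, ht0]
      by_contra hcontr
      push_neg at hcontr
      nlinarith [hfin, mul_pos ht0 (neg_pos.mpr hcontr)]
    have hcoord : ∀ i : Fin d, Tendsto (fun n => (w ∘ φ) n i) atTop (nhds (wl i)) :=
      fun i => ((PiLp.continuous_apply (p := 2) (β := fun _ : Fin d => ℝ) i).tendsto wl).comp hconv
    have hg1 : Tendsto (fun n => σ * (w ∘ φ) n j) atTop (nhds (σ * wl j)) :=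
      (hcoord j).const_mul σ
    have hg2 : Tendsto (fun n => ∑ i ∈ Finset.univ.erase j, |(w ∘ φ) n i|) atTop
        (nhds (∑ i ∈ Finset.univ.erase j, |wl i|)) :=
      tendsto_finset_sum _ (fun i _ => (hcoord i).abs)
    have hglim : Tendsto (fun n => σ * w (φ n) j + 2 * ∑ i ∈ Finset.univ.erase j, |w (φ n) i|)
        atTop (nhds (σ * wl j + 2 * ∑ i ∈ Finset.univ.erase j, |wl i|)) :=
      hg1.add (hg2.const_mul 2)
    have hlim0 : 0 ≤ σ * wl j + 2 * ∑ i ∈ Finset.univ.erase j, |wl i| :=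
      le_of_tendsto_of_tendsto' tendsto_const_nhds hglim (fun n => key (φ n))
    have hz2 : ∑ i ∈ Finset.univ.erase j, |wl i| = 0 := by
      apply Finset.sum_eq_zero
      intro i hi
      rw [hwi i (Finset.ne_of_mem_erase hi)]; simp
    rw [hz2] at hlim0; linarith
  -- conclude wl j = σ, contradiction with interior
  have hwjσ : wl j = σ := by
    rcases abs_cases (wl j) with ⟨h1, h2⟩ | ⟨h1, h2⟩ <;> rw [hwj] at h1 <;>
      rcases hσ with h | h <;> rw [h] <;> rw [h] at hsign <;> nlinarith
  have hflat : ∀ q ∈ K, σ * q j = σ * p j := by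
    intro q hq
    have h1 := hsupp q hq
    have h2 : ⟪wl, q⟫ = σ * q j := by
      rw [PiLp.inner_apply]
      rw [Finset.sum_eq_single j]
      · simp only [RCLike.inner_apply, starRingEnd_apply, star_trivial, hwjσ]
        try ring
      · intro i _ hij; rw [hwi i hij]; simp [RCLike.inner_apply]
      · intro h; exact absurd (Finset.mem_univ j) h
    have h3 : ⟪wl, p⟫ = σ * p j := by
      rw [PiLp.inner_apply]
      rw [Finset.sum_eq_single j]
      · simp only [RCLike.inner_apply, starRingEnd_apply, star_trivial, hwjσ]
        try ring
      · intro i _ hij; rw [hwi i hij]; simp [RCLike.inner_apply]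
      · intro h; exact absurd (Finset.mem_univ j) h
    rw [h2, h3] at h1
    have := hp q hq
    linarith
  obtain ⟨ε, hε, hball⟩ := Metric.isOpen_iff.mp isOpen_interior z hz
  have hz' : z + (ε/2) • EuclideanSpace.single j σ ∈ K := by
    apply interior_subset
    apply hball
    rw [Metric.mem_ball, dist_eq_norm]
    have : z + (ε/2) • EuclideanSpace.single j σ - z = (ε/2) • EuclideanSpace.single j σ := by abel
    rw [this, norm_smul, EuclideanSpace.norm_single]
    rw [Real.norm_eq_abs, Real.norm_eq_abs, hσ1]
    rw [abs_of_pos (by linarith)]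
    linarith
  have hc1 := hflat _ hz'
  have hc2 := hflat z (interior_subset hz)
  have : (z + (ε/2) • EuclideanSpace.single j σ) j = z j + ε/2 * σ := by
    have h5 : (z + (ε/2) • EuclideanSpace.single j σ) j
        = z j + (ε/2) * (EuclideanSpace.single j σ) j := by simp
    rw [h5, EuclideanSpace.single_apply]; simp
  rw [this] at hc1
  nlinarith [hε]


/-- sign as a real number -/
def sg (b : Bool) : ℝ := if b then 1 else -1

lemma sg_cases (b : Bool) : sg b = 1 ∨ sg b = -1 := by
  cases b <;> simp [sg]

lemma sg_sq (b : Bool) : sg b * sg b = 1 := by cases b <;> norm_num [sg]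

lemma sg_abs (b : Bool) : |sg b| = 1 := by cases b <;> norm_num [sg]

structure StX (d : ℕ) where
  u : Finset ℕ
  xf : ℕ → EuclideanSpace ℝ (Fin d)
  aN : ℝ
  bN : ℝ
  E : ℝ
  aC : ℝ
  ess : Fin d × Bool → ℕ
  lo : Option ℕ

variable (K : Set (EuclideanSpace ℝ (Fin d))) (lam : ℕ → ℝ)

def InvX (s : StX d) : Prop :=
  0 < s.aN ∧ 2 * s.aN = s.bN ∧ s.bN ≤ s.E ∧
    (∀ i ∈ s.u, ∀ y ∈ s.xf i +ᵥ lam i • K, ∀ j, |y j| ≤ s.E)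

structure IsStep (R : ℝ) (j0 : Fin d) (s s' : StX d) : Prop where
  haC : s'.aC = s.aN
  hsub : s.u ⊆ s'.u
  hxf : ∀ i ∈ s.u, s'.xf i = s.xf i
  hessmem : ∀ t : Fin d × Bool, s'.ess t ∈ s'.u
  hessnew : ∀ t : Fin d × Bool, s'.ess t ∉ s.u
  hunew : ∀ i ∈ s'.u, i ∈ s.u ∨ (∃ t, i = s'.ess t) ∨ s'.lo = some i
  hlo : ∀ i0, s'.lo = some i0 → i0 ∈ s'.u ∧ i0 ∉ s.u ∧ (∀ t, i0 ≠ s'.ess t)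
  hlomin : ∀ i, i ∉ s.u → 2 * lam i * R < s'.aC → ∃ i0, s'.lo = some i0 ∧ i0 ≤ i
  hessP1 : ∀ t : Fin d × Bool, ∀ y ∈ s'.xf (s'.ess t) +ᵥ lam (s'.ess t) • K,
      s'.aC ≤ sg t.2 * y t.1 ∧ ∀ j, |y j| ≤ s'.E
  hessP2 : ∀ t : Fin d × Bool, ∀ y : EuclideanSpace ℝ (Fin d),
      s'.aC < sg t.2 * y t.1 → sg t.2 * y t.1 ≤ s'.bN →
      (∀ j, j ≠ t.1 → |y j| ≤ 2 * (sg t.2 * y t.1 - s'.aC)) →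
      y ∈ s'.xf (s'.ess t) +ᵥ lam (s'.ess t) • K
  hball : ∀ i0, s'.lo = some i0 → ∀ y ∈ s'.xf i0 +ᵥ lam i0 • K,
      (s.E + 1 ≤ y j0) ∧ (∀ j, |y j| ≤ s'.E ∧ |y j| + 1 ≤ s'.aN) ∧
      (∀ j, j ≠ j0 → |y j| < s'.aC)
  hords : 0 < s'.aC ∧ s.E + 1 ≤ s'.aN ∧ 2 * s'.aN = s'.bN ∧ s'.bN ≤ s'.E ∧
      s.E ≤ s'.E ∧ 2 * s'.aC < s'.bN

lemma mem_cp_iff {l : ℝ} (hl : 0 < l) {v y : EuclideanSpace ℝ (Fin d)} :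
    y ∈ v +ᵥ l • K ↔ l⁻¹ • (y - v) ∈ K := by
  rw [Set.mem_vadd_set_iff_neg_vadd_mem, Set.mem_smul_set_iff_inv_smul_mem₀ hl.ne']
  have : -v +ᵥ y = y - v := by
    simp [vadd_eq_add]; abel
  rw [this]

lemma mem_cp_intro {l : ℝ} (hl : 0 < l) {v q : EuclideanSpace ℝ (Fin d)} (hq : q ∈ K) :
    v + l • q ∈ v +ᵥ l • K := by
  rw [mem_cp_iff K hl]
  have : l⁻¹ • (v + l • q - v) = q := by
    rw [show v + l • q - v = l • q by abel, smul_smul, inv_mul_cancel₀ hl.ne', one_smul]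
  rwa [this]

lemma cp_coord {l : ℝ} (hl : 0 < l) {v y : EuclideanSpace ℝ (Fin d)}
    (hy : y ∈ v +ᵥ l • K) : ∃ q ∈ K, ∀ j, y j = v j + l * q j := by
  rw [mem_cp_iff K hl] at hy
  refine ⟨_, hy, fun j => ?_⟩
  have : (l⁻¹ • (y - v)) j = l⁻¹ * (y j - v j) := by simp
  rw [this]
  field_simp
  ring

-- choosing indices with large lam
lemma exists_big (hunb : ¬ BddAbove (Set.range lam)) (M : ℝ) (F : Finset ℕ) :
    ∃ i, i ∉ F ∧ M ≤ lam i := by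
  by_contra h
  push_neg at h
  apply hunb
  refine ⟨(insert M (F.image lam)).max' (by simp), ?_⟩
  rintro v ⟨i, rfl⟩
  by_cases hi : i ∈ F
  · exact Finset.le_max' _ _ (Finset.mem_insert_of_mem (Finset.mem_image_of_mem lam hi))
  · exact le_trans (h i hi).le (Finset.le_max' _ _ (Finset.mem_insert_self _ _))

lemma pick_many (hunb : ¬ BddAbove (Set.range lam)) (n : ℕ) (F : Finset ℕ) (M : ℝ) :
    ∃ g : Fin n → ℕ, Function.Injective g ∧ ∀ a, g a ∉ F ∧ M ≤ lam (g a) := by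
  induction n generalizing F with
  | zero => exact ⟨fun a => 0, fun a => absurd a.2 (by omega), fun a => absurd a.2 (by omega)⟩
  | succ m ih =>
    obtain ⟨i0, hi0F, hi0M⟩ := exists_big lam hunb M F
    obtain ⟨g, hginj, hg⟩ := ih (insert i0 F)
    refine ⟨Fin.cons i0 g, ?_, ?_⟩
    · intro a b hab
      rcases Fin.eq_zero_or_eq_succ a with rfl | ⟨a', rfl⟩ <;>
        rcases Fin.eq_zero_or_eq_succ b with rfl | ⟨b', rfl⟩
      · rfl
      · simp only [Fin.cons_zero, Fin.cons_succ] at hab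
        exact absurd hab.symm (by have := (hg b').1; simp at this; intro h; exact this.1 h)
      · simp only [Fin.cons_zero, Fin.cons_succ] at hab
        exact absurd hab (by have := (hg a').1; simp at this; intro h; exact this.1 h)
      · simp only [Fin.cons_succ] at hab
        rw [hginj hab]
    · intro a
      rcases Fin.eq_zero_or_eq_succ a with rfl | ⟨a', rfl⟩
      · simpa using ⟨hi0F, hi0M⟩
      · simp only [Fin.cons_succ]
        have := hg a'
        simp at this
        exact ⟨this.1.2, this.2⟩

lemma pick_slots (hunb : ¬ BddAbove (Set.range lam)) (F : Finset ℕ) (M : ℝ) :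
    ∃ g : Fin d × Bool → ℕ, Function.Injective g ∧ ∀ a, g a ∉ F ∧ M ≤ lam (g a) := by
  obtain ⟨g, hinj, hg⟩ := pick_many lam hunb (Fintype.card (Fin d × Bool)) F M
  exact ⟨g ∘ (Fintype.equivFin (Fin d × Bool)), hinj.comp (Equiv.injective _),
    fun a => hg _⟩

lemma exists_chain {α : Type*} (I : α → Prop) (S : α → α → Prop) (a0 : α) (h0 : I a0)
    (hstep : ∀ a, I a → ∃ b, S a b ∧ I b) :
    ∃ f : ℕ → α, f 0 = a0 ∧ (∀ n, I (f n)) ∧ ∀ n, S (f n) (f (n+1)) := by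
  choose F hF1 hF2 using hstep
  let g : ℕ → {a : α // I a} := fun n => Nat.rec ⟨a0, h0⟩ (fun _ p => ⟨F p.1 p.2, hF2 p.1 p.2⟩) n
  exact ⟨fun n => (g n).1, rfl, fun n => (g n).2, fun n => hF1 (g n).1 (g n).2⟩

set_option maxHeartbeats 1000000 in
lemma step_ex (j0 : Fin d)
    (R : ℝ) (hR : 0 < R) (hRK : ∀ q ∈ K, ∀ j, |q j| ≤ R)
    (z : EuclideanSpace ℝ (Fin d)) (hzK : z ∈ K)
    (T0 : ℝ) (hT0 : 0 < T0)
    (P : Fin d × Bool → EuclideanSpace ℝ (Fin d))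
    (hPK : ∀ t, P t ∈ K)
    (hPmin : ∀ t : Fin d × Bool, ∀ q ∈ K, sg t.2 * (P t) t.1 ≤ sg t.2 * q t.1)
    (hPpyr : ∀ t : Fin d × Bool, ∀ y : EuclideanSpace ℝ (Fin d),
      0 < sg t.2 * (y t.1 - P t t.1) → sg t.2 * (y t.1 - P t t.1) ≤ T0 →
      (∀ i, i ≠ t.1 → |y i - P t i| ≤ 2 * (sg t.2 * (y t.1 - P t t.1))) → y ∈ K)
    (hpos : ∀ i, 0 < lam i) (hunb : ¬ BddAbove (Set.range lam))
    (s : StX d) (hs : InvX K lam s) :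
    ∃ s', IsStep K lam R j0 s s' ∧ InvX K lam s' := by
  obtain ⟨haN, habN, hbNE, hcube⟩ := hs
  set aC := s.aN with haCdef
  have haC : 0 < aC := haN
  have hE0 : 0 < s.E := by linarith
  -- leftover choice
  have hloex : ∃ (lop : Option ℕ) (ρ : ℝ), 0 ≤ ρ ∧ ρ < aC ∧
      (∀ i0, lop = some i0 → i0 ∉ s.u ∧ ρ = 2 * lam i0 * R) ∧
      (∀ i, i ∉ s.u → 2 * lam i * R < aC → ∃ i0, lop = some i0 ∧ i0 ≤ i) := by
    by_cases hLO : ∃ i, i ∉ s.u ∧ 2 * lam i * R < aC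
    · have hspec := Nat.find_spec hLO
      refine ⟨some (Nat.find hLO), 2 * lam (Nat.find hLO) * R, ?_, hspec.2, ?_, ?_⟩
      · have := (hpos (Nat.find hLO)).le; positivity
      · intro i0 h
        rw [Option.some_inj] at h
        subst h
        exact ⟨hspec.1, rfl⟩
      · intro i hiu hi
        exact ⟨Nat.find hLO, rfl, Nat.find_min' hLO ⟨hiu, hi⟩⟩
    · push_neg at hLO
      refine ⟨none, 0, le_refl _, haC, by simp, ?_⟩
      intro i hiu hi
      exact absurd hi (not_lt.mpr (hLO i hiu))
  obtain ⟨lop, ρ, hρ0, hρaC, hlopS, hlopMin⟩ := hloex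
  set c : ℝ := s.E + 1 + ρ with hcdef
  have hc0 : 0 < c := by linarith
  set Favoid : Finset ℕ := s.u ∪ (lop.elim ∅ (fun i => {i})) with hFav
  set M : ℝ := (2 * s.E + 4 * ρ + 4 + 2 * aC) / T0 with hMdef
  obtain ⟨g, hginj, hg⟩ := pick_slots lam hunb Favoid M
  have hgu : ∀ t, g t ∉ s.u := by
    intro t
    have := (hg t).1
    rw [hFav] at this
    simp only [Finset.mem_union] at this
    tauto
  have hglop : ∀ t, ∀ i0, lop = some i0 → g t ≠ i0 := by
    intro t i0 hi0 h
    apply (hg t).1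
    rw [hFav, hi0]
    simp [h]
  have hne : (Finset.univ : Finset (Fin d × Bool)).Nonempty := ⟨(j0, true), Finset.mem_univ _⟩
  set lamMin : ℝ := Finset.univ.inf' hne (fun t => lam (g t)) with hlamMindef
  have hlamMin_le : ∀ t, lamMin ≤ lam (g t) := fun t => Finset.inf'_le _ (Finset.mem_univ t)
  have hlamMinM : M ≤ lamMin := Finset.le_inf' hne _ (fun t _ => (hg t).2)
  have hTM : 2 * s.E + 4 * ρ + 4 + 2 * aC ≤ T0 * lamMin := by
    have h1 : T0 * M ≤ T0 * lamMin := mul_le_mul_of_nonneg_left hlamMinM hT0.le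
    have h2 : T0 * M = 2 * s.E + 4 * ρ + 4 + 2 * aC := by
      rw [hMdef]; field_simp
    linarith
  set bN' : ℝ := aC + T0 * lamMin with hbN'def
  set aN' : ℝ := (aC + T0 * lamMin) / 2 with haN'def
  have haN'big : s.E + 2 * ρ + 2 + aC ≤ aN' := by
    rw [haN'def]; linarith
  set pos : Fin d × Bool → EuclideanSpace ℝ (Fin d) :=
    fun t => (sg t.2 * aC) • EuclideanSpace.single t.1 (1:ℝ) - lam (g t) • P t with hposdef
  set posB : ℕ → EuclideanSpace ℝ (Fin d) :=
    fun i0 => c • EuclideanSpace.single j0 (1:ℝ) - lam i0 • z with hposBdef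
  have hposc : ∀ t j, pos t j = (if j = t.1 then sg t.2 * aC else 0) - lam (g t) * P t j := by
    intro t j
    simp only [hposdef]
    have : ((sg t.2 * aC) • EuclideanSpace.single t.1 (1:ℝ) - lam (g t) • P t) j
        = (sg t.2 * aC) * (EuclideanSpace.single t.1 (1:ℝ)) j - lam (g t) * P t j := by simp
    rw [this, EuclideanSpace.single_apply]
    split <;> simp
  have hposBc : ∀ i0 j, posB i0 j = (if j = j0 then c else 0) - lam i0 * z j := by
    intro i0 j
    simp only [hposBdef]
    have : (c • EuclideanSpace.single j0 (1:ℝ) - lam i0 • z) j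
        = c * (EuclideanSpace.single j0 (1:ℝ)) j - lam i0 * z j := by simp
    rw [this, EuclideanSpace.single_apply]
    split <;> simp
  classical
  set xf' : ℕ → EuclideanSpace ℝ (Fin d) := fun i =>
    if h : ∃ t, g t = i then pos (Classical.choose h)
    else if lop = some i then posB i else s.xf i with hxf'def
  have hxf'g : ∀ t, xf' (g t) = pos t := by
    intro t
    have h : ∃ t', g t' = g t := ⟨t, rfl⟩
    rw [hxf'def]
    simp only [dif_pos h]
    rw [hginj (Classical.choose_spec h)]
  have hxf'lo : ∀ i0, lop = some i0 → xf' i0 = posB i0 := by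
    intro i0 hi0
    rw [hxf'def]
    have h1 : ¬ ∃ t, g t = i0 := by
      rintro ⟨t, ht⟩
      exact hglop t i0 hi0 ht
    simp only [dif_neg h1, if_pos hi0]
  have hxf'old : ∀ i ∈ s.u, xf' i = s.xf i := by
    intro i hi
    rw [hxf'def]
    have h1 : ¬ ∃ t, g t = i := by
      rintro ⟨t, ht⟩
      exact hgu t (ht ▸ hi)
    have h2 : ¬ lop = some i := by
      intro h
      exact (hlopS i h).1 hi
    simp only [dif_neg h1, if_neg h2]
  set u' : Finset ℕ := (s.u ∪ Finset.image g Finset.univ) ∪ (lop.elim ∅ (fun i => {i}))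
    with hu'def
  set E' : ℝ := s.E + (c + ρ) + bN' + (aC + Finset.univ.sup' hne (fun t => 2 * lam (g t) * R))
    with hE'def
  have hsup_le : ∀ t, 2 * lam (g t) * R ≤ Finset.univ.sup' hne (fun t => 2 * lam (g t) * R) :=
    fun t => Finset.le_sup' (f := fun t => 2 * lam (g t) * R) (Finset.mem_univ t)
  have hsup_pos : 0 < Finset.univ.sup' hne (fun t => 2 * lam (g t) * R) := by
    refine lt_of_lt_of_le ?_ (hsup_le (j0, true))
    have := hpos (g (j0, true)); positivity
  have hbN'pos : 0 < bN' := by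
    rw [hbN'def]; nlinarith
  have hE'ineq : s.E ≤ E' ∧ c + ρ ≤ E' ∧ bN' ≤ E' ∧
      (∀ t, aC + 2 * lam (g t) * R ≤ E') := by
    refine ⟨by rw [hE'def]; nlinarith, by rw [hE'def]; nlinarith, by rw [hE'def]; nlinarith, ?_⟩
    intro t
    have := hsup_le t
    rw [hE'def]; nlinarith
  -- essential copy properties
  have hcopy1 : ∀ t : Fin d × Bool, ∀ y ∈ pos t +ᵥ lam (g t) • K,
      aC ≤ sg t.2 * y t.1 ∧ ∀ j, |y j| ≤ aC + 2 * lam (g t) * R := by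
    intro t y hy
    obtain ⟨q, hqK, hq⟩ := cp_coord K (hpos _) hy
    constructor
    · have h1 := hq t.1
      rw [hposc t t.1, if_pos rfl] at h1
      have h2 := hPmin t q hqK
      have h4 : sg t.2 * y t.1 - aC = lam (g t) * (sg t.2 * q t.1 - sg t.2 * P t t.1) := by
        linear_combination sg t.2 * h1 + aC * sg_sq t.2
      have h5 : 0 ≤ lam (g t) * (sg t.2 * q t.1 - sg t.2 * P t t.1) :=
        mul_nonneg (hpos _).le (by linarith)
      linarith
    · intro j
      have h1 := hq j
      rw [hposc t j] at h1
      have hl := (hpos (g t)).le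
      have h2 : |lam (g t) * q j| ≤ lam (g t) * R := by
        rw [abs_mul, abs_of_nonneg hl]
        exact mul_le_mul_of_nonneg_left (hRK q hqK j) hl
      have h3 : |lam (g t) * P t j| ≤ lam (g t) * R := by
        rw [abs_mul, abs_of_nonneg hl]
        exact mul_le_mul_of_nonneg_left (hRK (P t) (hPK t) j) hl
      have h6 : |(if j = t.1 then sg t.2 * aC else 0)| ≤ aC := by
        split
        · rw [abs_mul, sg_abs, one_mul, abs_of_pos haC]
        · simp [haC.le]
      calc |y j| = |(if j = t.1 then sg t.2 * aC else 0) - lam (g t) * P t j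
            + lam (g t) * q j| := by rw [h1]
        _ ≤ |(if j = t.1 then sg t.2 * aC else 0) - lam (g t) * P t j|
            + |lam (g t) * q j| := abs_add_le _ _
        _ ≤ (|(if j = t.1 then sg t.2 * aC else 0)| + |lam (g t) * P t j|)
            + |lam (g t) * q j| := by gcongr; exact abs_sub _ _
        _ ≤ aC + 2 * lam (g t) * R := by linarith
  have hcopy2 : ∀ t : Fin d × Bool, ∀ y : EuclideanSpace ℝ (Fin d),
      aC < sg t.2 * y t.1 → sg t.2 * y t.1 ≤ bN' →
      (∀ j, j ≠ t.1 → |y j| ≤ 2 * (sg t.2 * y t.1 - aC)) →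
      y ∈ pos t +ᵥ lam (g t) • K := by
    intro t y hy1 hy2 hy3
    set l := lam (g t) with hldef
    have hl : 0 < l := hpos _
    rw [mem_cp_iff K hl]
    set qq := l⁻¹ • (y - pos t) with hqqdef
    have hqqc : ∀ j, qq j = l⁻¹ * (y j - pos t j) := by
      intro j; rw [hqqdef]; simp
    have hkey : ∀ j, qq j - P t j = l⁻¹ * (y j - (if j = t.1 then sg t.2 * aC else 0)) := by
      intro j
      rw [hqqc j, hposc t j]
      field_simp
      ring
    have hsq := sg_sq t.2
    have hk1 : qq t.1 - P t t.1 = l⁻¹ * (y t.1 - sg t.2 * aC) := by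
      have := hkey t.1
      rwa [if_pos rfl] at this
    have hmain : sg t.2 * (qq t.1 - P t t.1) = l⁻¹ * (sg t.2 * y t.1 - aC) := by
      rcases sg_cases t.2 with hs | hs <;> rw [hs] at hk1 ⊢
      · linear_combination hk1
      · linear_combination -hk1
    apply hPpyr t qq
    · rw [hmain]
      have : 0 < sg t.2 * y t.1 - aC := by linarith
      positivity
    · rw [hmain]
      have h1 : sg t.2 * y t.1 - aC ≤ T0 * lamMin := by
        rw [hbN'def] at hy2; linarith
      have h2 : T0 * lamMin ≤ T0 * l := mul_le_mul_of_nonneg_left (hlamMin_le t) hT0.le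
      rw [inv_mul_le_iff₀ hl]
      calc sg t.2 * y t.1 - aC ≤ T0 * lamMin := h1
        _ ≤ T0 * l := h2
        _ = l * T0 := by ring
    · intro i hi
      rw [hkey i, if_neg hi, sub_zero, hmain]
      have h1 := hy3 i hi
      rw [abs_mul, abs_of_pos (inv_pos.mpr hl)]
      have h2 : l⁻¹ * |y i| ≤ l⁻¹ * (2 * (sg t.2 * y t.1 - aC)) :=
        mul_le_mul_of_nonneg_left h1 (inv_pos.mpr hl).le
      calc l⁻¹ * |y i| ≤ l⁻¹ * (2 * (sg t.2 * y t.1 - aC)) := h2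
        _ = 2 * (l⁻¹ * (sg t.2 * y t.1 - aC)) := by ring
  -- ball copy properties
  have hcopyB : ∀ i0, lop = some i0 → ∀ y ∈ posB i0 +ᵥ lam i0 • K,
      (s.E + 1 ≤ y j0) ∧ (∀ j, |y j| ≤ c + ρ) ∧ (∀ j, j ≠ j0 → |y j| ≤ ρ) := by
    intro i0 hi0 y hy
    obtain ⟨q, hqK, hq⟩ := cp_coord K (hpos _) hy
    have hρeq : ρ = 2 * lam i0 * R := (hlopS i0 hi0).2
    have hl := (hpos i0).le
    have hzb := abs_le.mp (hRK z hzK j0)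
    have hqb := abs_le.mp (hRK q hqK j0)
    have hbd : ∀ j, |lam i0 * q j - lam i0 * z j| ≤ ρ := by
      intro j
      have h2 : |lam i0 * q j| ≤ lam i0 * R := by
        rw [abs_mul, abs_of_nonneg hl]
        exact mul_le_mul_of_nonneg_left (hRK q hqK j) hl
      have h3 : |lam i0 * z j| ≤ lam i0 * R := by
        rw [abs_mul, abs_of_nonneg hl]
        exact mul_le_mul_of_nonneg_left (hRK z hzK j) hl
      calc |lam i0 * q j - lam i0 * z j| ≤ |lam i0 * q j| + |lam i0 * z j| := abs_sub _ _
        _ ≤ ρ := by rw [hρeq]; linarith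
    have hyform : ∀ j, y j = (if j = j0 then c else 0) + (lam i0 * q j - lam i0 * z j) := by
      intro j
      rw [hq j, hposBc i0 j]
      ring
    refine ⟨?_, ?_, ?_⟩
    · have h1 := hyform j0
      rw [if_pos rfl] at h1
      have h2 := (abs_le.mp (hbd j0)).1
      rw [h1, hcdef]
      linarith
    · intro j
      have h1 := hyform j
      have h6 : |(if j = j0 then c else 0)| ≤ c := by
        split
        · rw [abs_of_pos hc0]
        · simp [hc0.le]
      calc |y j| ≤ |(if j = j0 then c else 0)| + |lam i0 * q j - lam i0 * z j| := by
            rw [h1]; exact abs_add_le _ _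
        _ ≤ c + ρ := by linarith [hbd j]
    · intro j hj
      have h1 := hyform j
      rw [if_neg hj] at h1
      rw [h1]
      simpa using hbd j
  -- assemble
  have hmem_u'_old : ∀ i ∈ s.u, i ∈ u' := by
    intro i hi
    rw [hu'def]
    exact Finset.mem_union_left _ (Finset.mem_union_left _ hi)
  have hmem_u'_g : ∀ t, g t ∈ u' := by
    intro t
    rw [hu'def]
    exact Finset.mem_union_left _
      (Finset.mem_union_right _ (Finset.mem_image_of_mem g (Finset.mem_univ t)))
  have hmem_u'_lo : ∀ i0, lop = some i0 → i0 ∈ u' := by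
    intro i0 hi0
    rw [hu'def]
    apply Finset.mem_union_right
    rw [hi0]
    simp
  have hunew' : ∀ i ∈ u', i ∈ s.u ∨ (∃ t, i = g t) ∨ lop = some i := by
    intro i hi
    rw [hu'def] at hi
    rcases Finset.mem_union.mp hi with h | h
    · rcases Finset.mem_union.mp h with h' | h'
      · exact Or.inl h'
      · obtain ⟨t, _, ht⟩ := Finset.mem_image.mp h'
        exact Or.inr (Or.inl ⟨t, ht.symm⟩)
    · right; right
      cases hlop : lop with
      | none => rw [hlop] at h; simp at h
      | some i0 =>
        rw [hlop] at h
        simp only [Option.elim, Finset.mem_singleton] at h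
        rw [h]
  have hcubeall : ∀ i ∈ u', ∀ y ∈ xf' i +ᵥ lam i • K, ∀ j, |y j| ≤ E' := by
    intro i hi y hy j
    rcases hunew' i hi with h | ⟨t, rfl⟩ | h
    · rw [hxf'old i h] at hy
      exact le_trans (hcube i h y hy j) hE'ineq.1
    · rw [hxf'g t] at hy
      exact le_trans ((hcopy1 t y hy).2 j) (hE'ineq.2.2.2 t)
    · rw [hxf'lo i h] at hy
      exact le_trans ((hcopyB i h y hy).2.1 j) hE'ineq.2.1
  have hP1' : ∀ t : Fin d × Bool, ∀ y ∈ xf' (g t) +ᵥ lam (g t) • K,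
      aC ≤ sg t.2 * y t.1 ∧ ∀ j, |y j| ≤ E' := by
    intro t y hy
    rw [hxf'g t] at hy
    obtain ⟨h1, h2⟩ := hcopy1 t y hy
    exact ⟨h1, fun j => le_trans (h2 j) (hE'ineq.2.2.2 t)⟩
  have hP2' : ∀ t : Fin d × Bool, ∀ y : EuclideanSpace ℝ (Fin d),
      aC < sg t.2 * y t.1 → sg t.2 * y t.1 ≤ bN' →
      (∀ j, j ≠ t.1 → |y j| ≤ 2 * (sg t.2 * y t.1 - aC)) →
      y ∈ xf' (g t) +ᵥ lam (g t) • K := by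
    intro t y h1 h2 h3
    rw [hxf'g t]
    exact hcopy2 t y h1 h2 h3
  have hball' : ∀ i0, lop = some i0 → ∀ y ∈ xf' i0 +ᵥ lam i0 • K,
      (s.E + 1 ≤ y j0) ∧ (∀ j, |y j| ≤ E' ∧ |y j| + 1 ≤ aN') ∧
      (∀ j, j ≠ j0 → |y j| < aC) := by
    intro i0 hi0 y hy
    rw [hxf'lo i0 hi0] at hy
    obtain ⟨h1, h2, h3⟩ := hcopyB i0 hi0 y hy
    refine ⟨h1, fun j => ⟨le_trans (h2 j) hE'ineq.2.1, ?_⟩,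
      fun j hj => lt_of_le_of_lt (h3 j hj) hρaC⟩
    have h5 := h2 j
    have h4 : c + ρ + 1 ≤ aN' := by
      rw [hcdef] at *
      linarith [haN'big]
    linarith
  have hords' : 0 < aC ∧ s.E + 1 ≤ aN' ∧ 2 * aN' = bN' ∧ bN' ≤ E' ∧ s.E ≤ E' ∧
      2 * aC < bN' :=
    ⟨haC, by linarith [haN'big], by rw [haN'def, hbN'def]; ring,
      hE'ineq.2.2.1, hE'ineq.1, by rw [hbN'def]; nlinarith⟩
  have hlo' : ∀ i0, lop = some i0 → i0 ∈ u' ∧ i0 ∉ s.u ∧ (∀ t, i0 ≠ g t) :=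
    fun i0 hi0 => ⟨hmem_u'_lo i0 hi0, (hlopS i0 hi0).1, fun t h => hglop t i0 hi0 h.symm⟩
  refine ⟨⟨u', xf', aN', bN', E', aC, g, lop⟩,
    ⟨rfl, hmem_u'_old, hxf'old, hmem_u'_g, hgu, hunew', hlo', hlopMin, hP1', hP2', hball',
      hords'⟩,
    ⟨by rw [haN'def]; nlinarith, by rw [haN'def, hbN'def]; ring, hE'ineq.2.2.1, hcubeall⟩⟩

lemma norm_le_card_mul' (x : EuclideanSpace ℝ (Fin d)) (c : ℝ) (hc : 0 ≤ c)
    (h : ∀ j, |x j| ≤ c) : ‖x‖ ≤ d * c := by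
  rw [EuclideanSpace.norm_eq]
  have h1 : ∑ i, ‖x i‖^2 ≤ ∑ _i : Fin d, c^2 := by
    apply Finset.sum_le_sum
    intro i _
    have := h i
    rw [Real.norm_eq_abs]
    nlinarith [abs_nonneg (x i)]
  calc Real.sqrt (∑ i, ‖x i‖^2) ≤ Real.sqrt (∑ _i : Fin d, c^2) := Real.sqrt_le_sqrt h1
    _ = Real.sqrt (d * c^2) := by simp [mul_comm]
    _ ≤ Real.sqrt ((d*c)^2) := by
        apply Real.sqrt_le_sqrt
        have hdd : (d:ℝ) ≤ (d:ℝ)^2 := by exact_mod_cast Nat.le_self_pow two_ne_zero d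
        nlinarith [sq_nonneg c, Nat.cast_nonneg (α := ℝ) d]
    _ = d * c := by rw [Real.sqrt_sq (by positivity)]

lemma init_ex (hd : 0 < d)
    (R : ℝ) (hR : 0 < R) (hRK : ∀ q ∈ K, ∀ j, |q j| ≤ R)
    (z : EuclideanSpace ℝ (Fin d)) (rr : ℝ) (hrr : 0 < rr)
    (hrball : Metric.closedBall z rr ⊆ K)
    (hpos : ∀ i, 0 < lam i) :
    ∃ s0 : StX d, InvX K lam s0 ∧ s0.u = {0} ∧
      (∀ y : EuclideanSpace ℝ (Fin d), (∀ j, |y j| ≤ s0.bN) → y ∈ s0.xf 0 +ᵥ lam 0 • K) := by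
  have hzK : z ∈ K := hrball (Metric.mem_closedBall_self hrr.le)
  have hd' : (0:ℝ) < d := by exact_mod_cast hd
  have hl0 := hpos 0
  set j0 : Fin d := ⟨0, hd⟩
  have hrR : rr ≤ 2 * R := by
    have hz' : z + rr • EuclideanSpace.single j0 (1:ℝ) ∈ K := by
      apply hrball
      rw [Metric.mem_closedBall, dist_eq_norm]
      have h6 : z + rr • EuclideanSpace.single j0 (1:ℝ) - z
          = rr • EuclideanSpace.single j0 (1:ℝ) := by abel
      rw [h6, norm_smul, EuclideanSpace.norm_single]
      simp [abs_of_pos hrr]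
    have h1 := hRK _ hz' j0
    have h2 := hRK z hzK j0
    have h3 : (z + rr • EuclideanSpace.single j0 (1:ℝ)) j0 = z j0 + rr := by
      have h7 : (z + rr • EuclideanSpace.single j0 (1:ℝ)) j0
          = z j0 + rr * (EuclideanSpace.single j0 (1:ℝ)) j0 := by simp
      rw [h7, EuclideanSpace.single_apply, if_pos rfl, mul_one]
    rw [h3] at h1
    have h4 := abs_le.mp h1
    have h5 := abs_le.mp h2
    linarith
  set v0 : EuclideanSpace ℝ (Fin d) := (-(lam 0)) • z with hv0
  have hcube0 : ∀ i ∈ ({0} : Finset ℕ), ∀ y ∈ v0 +ᵥ lam i • K, ∀ j,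
      |y j| ≤ 2 * lam 0 * R := by
    intro i hi y hy j
    simp only [Finset.mem_singleton] at hi
    subst hi
    obtain ⟨q, hqK, hq⟩ := cp_coord K hl0 hy
    have h1 := hq j
    have h2 : v0 j = -(lam 0 * z j) := by rw [hv0]; simp
    rw [h2] at h1
    have h3 := abs_le.mp (hRK q hqK j)
    have h4 := abs_le.mp (hRK z hzK j)
    rw [abs_le, h1]
    constructor <;> nlinarith
  have hcov0 : ∀ y : EuclideanSpace ℝ (Fin d),
      (∀ j, |y j| ≤ lam 0 * rr / d) → y ∈ v0 +ᵥ lam 0 • K := by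
    intro y hy
    have hnorm : ‖y‖ ≤ lam 0 * rr := by
      have := norm_le_card_mul' y (lam 0 * rr / d) (by positivity) hy
      calc ‖y‖ ≤ d * (lam 0 * rr / d) := this
        _ = lam 0 * rr := by field_simp
    have hqK : z + (lam 0)⁻¹ • y ∈ K := by
      apply hrball
      rw [Metric.mem_closedBall, dist_eq_norm]
      have h8 : z + (lam 0)⁻¹ • y - z = (lam 0)⁻¹ • y := by abel
      rw [h8, norm_smul]
      rw [Real.norm_eq_abs, abs_of_pos (inv_pos.mpr hl0)]
      rw [inv_mul_le_iff₀ hl0]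
      calc ‖y‖ ≤ lam 0 * rr := hnorm
        _ = lam 0 * rr := rfl
    have h9 : v0 + lam 0 • (z + (lam 0)⁻¹ • y) = y := by
      rw [hv0, smul_add, smul_smul, mul_inv_cancel₀ hl0.ne', one_smul, neg_smul]
      abel
    rw [← h9]
    exact mem_cp_intro K hl0 hqK
  have hinv1 : (0:ℝ) < lam 0 * rr / (2*d) := by positivity
  have hinv2 : 2 * (lam 0 * rr / (2*d)) = lam 0 * rr / d := by field_simp
  have hinv3 : lam 0 * rr / d ≤ 2 * lam 0 * R := by
    rw [div_le_iff₀ hd']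
    have hd1 : (1:ℝ) ≤ d := by exact_mod_cast hd
    have k1 : lam 0 * rr ≤ lam 0 * (2*R) := mul_le_mul_of_nonneg_left hrR hl0.le
    have k2 : 2 * lam 0 * R * 1 ≤ 2 * lam 0 * R * d :=
      mul_le_mul_of_nonneg_left hd1 (by positivity)
    linarith
  exact ⟨⟨{0}, fun _ => v0, lam 0 * rr / (2*d), lam 0 * rr / d,
    2 * lam 0 * R, 0, fun _ => 0, none⟩, ⟨hinv1, hinv2, hinv3, hcube0⟩, rfl, hcov0⟩



lemma sg_mul_le_abs (b : Bool) (v : ℝ) : sg b * v ≤ |v| := by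
  rcases sg_cases b with h | h <;> rw [h]
  · simpa using le_abs_self v
  · rw [neg_one_mul]; exact neg_abs_le v |>.trans (le_abs_self v) |> fun _ => neg_le_abs v

lemma sg_det (b : Bool) (v : ℝ) (h : 0 < sg b * v) : b = decide (0 < v) := by
  cases b with
  | false =>
    have hv : ¬ 0 < v := by
      simp only [sg, Bool.false_eq_true, if_false] at h
      intro hc; nlinarith
    simp [hv]
  | true =>
    have hv : 0 < v := by
      simp only [sg, if_true] at h
      linarith
    simp [hv]

theorem stmt3 (d : ℕ) (hd : 0 < d) (K : Set (EuclideanSpace ℝ (Fin d)))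
    (hKcomp : IsCompact K) (hKconv : Convex ℝ K) (hKint : (interior K).Nonempty)
    (hsmooth : ∀ p ∈ K, ∀ j : Fin d,
      (IsMaxOn (fun q : EuclideanSpace ℝ (Fin d) => ⟪q, EuclideanSpace.single j (1:ℝ)⟫) K p ∨
       IsMinOn (fun q : EuclideanSpace ℝ (Fin d) => ⟪q, EuclideanSpace.single j (1:ℝ)⟫) K p) →
      SmoothBdryAt K p)
    (lam : ℕ → ℝ) (hpos : ∀ i, 0 < lam i)
    (hunb : ¬ BddAbove (Set.range lam)) :
    ∃ x : ℕ → EuclideanSpace ℝ (Fin d),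
      (⋃ i, x i +ᵥ lam i • K) = Set.univ ∧
      ∀ p : EuclideanSpace ℝ (Fin d),
        {i : ℕ | p ∈ x i +ᵥ lam i • K}.encard ≤ ((2 * d : ℕ) : ℕ∞) := by
  classical
  set j0 : Fin d := ⟨0, hd⟩ with hj0
  obtain ⟨z0, hz0⟩ := hKint
  have hzK : z0 ∈ K := interior_subset hz0
  obtain ⟨ε, hε, hballε⟩ := Metric.isOpen_iff.mp isOpen_interior z0 hz0
  have hrball : Metric.closedBall z0 (ε/2) ⊆ K := by
    intro y hy
    exact interior_subset (hballε (lt_of_le_of_lt (Metric.mem_closedBall.mp hy) (by linarith)))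
  obtain ⟨R0, hR0⟩ := hKcomp.isBounded.subset_closedBall 0
  set R := max R0 1 with hRdef
  have hR : 0 < R := lt_of_lt_of_le one_pos (le_max_right _ _)
  have hRK : ∀ q ∈ K, ∀ j, |q j| ≤ R := by
    intro q hq j
    have h1 : ‖q‖ ≤ R0 := by
      have := hR0 hq
      rwa [Metric.mem_closedBall, dist_zero_right] at this
    exact le_trans (coord_abs_le_norm q j) (le_trans h1 (le_max_left _ _))
  -- pyramid data
  have hpyrall : ∀ t : Fin d × Bool, ∃ p, p ∈ K ∧ ∃ T, 0 < T ∧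
      (∀ q ∈ K, sg t.2 * p t.1 ≤ sg t.2 * q t.1) ∧
      (∀ y : EuclideanSpace ℝ (Fin d), 0 < sg t.2 * (y t.1 - p t.1) →
        sg t.2 * (y t.1 - p t.1) ≤ T →
        (∀ i, i ≠ t.1 → |y i - p i| ≤ 2 * (sg t.2 * (y t.1 - p t.1))) → y ∈ K) := by
    intro t
    obtain ⟨p, hp, T, hT, hmin, hpyr⟩ :=
      pyramid K hKcomp hKconv ⟨z0, hz0⟩ hsmooth t.1 (sg t.2) (sg_cases t.2)
    exact ⟨p, hp, T, hT, hmin, hpyr⟩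
  choose P hPK Tf hTpos hPmin hPpyrT using hpyrall
  have hne : (Finset.univ : Finset (Fin d × Bool)).Nonempty := ⟨(j0, true), Finset.mem_univ _⟩
  set T0 := Finset.univ.inf' hne Tf with hT0def
  have hT0 : 0 < T0 := by
    rw [hT0def, Finset.lt_inf'_iff]
    exact fun t _ => hTpos t
  have hT0le : ∀ t, T0 ≤ Tf t := fun t => Finset.inf'_le _ (Finset.mem_univ t)
  have hPpyr : ∀ t : Fin d × Bool, ∀ y : EuclideanSpace ℝ (Fin d),
      0 < sg t.2 * (y t.1 - P t t.1) → sg t.2 * (y t.1 - P t t.1) ≤ T0 →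
      (∀ i, i ≠ t.1 → |y i - P t i| ≤ 2 * (sg t.2 * (y t.1 - P t t.1))) → y ∈ K :=
    fun t y h1 h2 h3 => hPpyrT t y h1 (le_trans h2 (hT0le t)) h3
  -- init and chain
  obtain ⟨s0, hs0inv, hs0u, hs0cov⟩ :=
    init_ex K lam hd R hR hRK z0 (ε/2) (by linarith) hrball hpos
  obtain ⟨st, hst0, hstinv, hstep⟩ :=
    exists_chain (InvX K lam) (IsStep K lam R j0) s0 hs0inv
      (fun s hs => step_ex K lam j0 R hR hRK z0 hzK T0 hT0 P hPK hPmin hPpyr hpos hunb s hs)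
  -- basic facts
  have haNpos : ∀ k, 0 < (st k).aN := fun k => (hstinv k).1
  have habN : ∀ k, 2 * (st k).aN = (st k).bN := fun k => (hstinv k).2.1
  have hbNE : ∀ k, (st k).bN ≤ (st k).E := fun k => (hstinv k).2.2.1
  have hcube : ∀ k, ∀ i ∈ (st k).u, ∀ y ∈ (st k).xf i +ᵥ lam i • K, ∀ j, |y j| ≤ (st k).E :=
    fun k => (hstinv k).2.2.2
  have haNE : ∀ k, (st k).aN ≤ (st k).E := by
    intro k
    have h1 := haNpos k; have h2 := habN k; have h3 := hbNE k
    linarith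
  have hEpos : ∀ k, 0 < (st k).E := fun k => lt_of_lt_of_le (haNpos k) (haNE k)
  have hEstep : ∀ k, (st k).E ≤ (st (k+1)).E := fun k => (hstep k).hords.2.2.2.2.1
  have hEmono : ∀ k l, k ≤ l → (st k).E ≤ (st l).E := by
    intro k l h
    induction l, h using Nat.le_induction with
    | base => exact le_refl _
    | succ n hn ih => exact le_trans ih (hEstep n)
  have hanE : ∀ k, (st k).E + 1 ≤ (st (k+1)).aN := fun k => (hstep k).hords.2.1
  have haNstep : ∀ k, (st k).aN + 1 ≤ (st (k+1)).aN := by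
    intro k
    have h1 := hanE k; have h2 := haNE k
    linarith
  have haNmono : ∀ k l, k ≤ l → (st k).aN ≤ (st l).aN := by
    intro k l h
    induction l, h using Nat.le_induction with
    | base => exact le_refl _
    | succ n hn ih => exact le_trans ih (by linarith [haNstep n])
  have haNgrow : ∀ k : ℕ, (st 0).aN + (k:ℝ) ≤ (st k).aN := by
    intro k
    induction k with
    | zero => simp
    | succ n ih =>
      have := haNstep n
      push_cast
      push_cast at ih
      linarith
  have husub : ∀ k l, k ≤ l → (st k).u ⊆ (st l).u := by
    intro k l h
    induction l, h using Nat.le_induction with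
    | base => exact subset_refl _
    | succ n hn ih => exact subset_trans ih (hstep n).hsub
  have hxfstab : ∀ i k l, k ≤ l → i ∈ (st k).u → (st l).xf i = (st k).xf i := by
    intro i k l h hm
    induction l, h using Nat.le_induction with
    | base => rfl
    | succ n hn ih => rw [(hstep n).hxf i (husub k n hn hm), ih]
  have haCrel : ∀ k, (st (k+1)).aC = (st k).aN := fun k => (hstep k).haC
  -- totality
  have htot : ∀ i, ∃ k, i ∈ (st k).u := by
    intro i
    induction i using Nat.strong_induction_on with
    | _ i ih =>
    by_contra hno
    push_neg at hno
    have hsmall : ∀ i', i' < i → ∃ k, i' ∈ (st k).u := fun i' hi' => ih i' hi'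
    choose f hf using hsmall
    set k0 := (Finset.range i).sup (fun i' => if h : i' < i then f i' h else 0) with hk0def
    have hk0 : ∀ i', (h : i' < i) → i' ∈ (st k0).u := by
      intro i' h
      apply husub (f i' h) k0 _ (hf i' h)
      have h2 := Finset.le_sup (f := fun i' => if h : i' < i then f i' h else 0)
        (Finset.mem_range.mpr h)
      simpa [dif_pos h] using h2
    obtain ⟨n, hn⟩ := exists_nat_gt (2 * lam i * R)
    set k1 := max k0 n with hk1def
    have hbig : 2 * lam i * R < (st k1).aN := by
      have h1 := haNgrow k1
      have h2 : (n:ℝ) ≤ (k1:ℝ) := by exact_mod_cast le_max_right k0 n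
      have h3 := haNpos 0
      linarith
    obtain ⟨i0, hlo, hle⟩ := (hstep k1).hlomin i (hno k1)
      (by rw [haCrel k1]; exact hbig)
    have hi0 := (hstep k1).hlo i0 hlo
    rcases eq_or_lt_of_le hle with rfl | hlt
    · exact hno (k1+1) hi0.1
    · exact hi0.2.1 (husub k0 k1 (le_max_left k0 n) (hk0 i0 hlt))
  -- positions
  set x : ℕ → EuclideanSpace ℝ (Fin d) := fun i => (st (Nat.find (htot i))).xf i with hxdef
  have hxeq : ∀ i k, i ∈ (st k).u → x i = (st k).xf i := by
    intro i k hk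
    rw [hxdef]
    exact (hxfstab i (Nat.find (htot i)) k (Nat.find_min' (htot i) hk)
      (Nat.find_spec (htot i))).symm
  have h0mem : (0:ℕ) ∈ (st 0).u := by
    rw [hst0, hs0u]; exact Finset.mem_singleton_self 0
  -- copy facts
  have hessP1x : ∀ k (t : Fin d × Bool),
      ∀ y ∈ x ((st (k+1)).ess t) +ᵥ lam ((st (k+1)).ess t) • K,
      (st k).aN ≤ sg t.2 * y t.1 ∧ ∀ j, |y j| ≤ (st (k+1)).E := by
    intro k t y hy
    rw [hxeq _ (k+1) ((hstep k).hessmem t)] at hy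
    have := (hstep k).hessP1 t y hy
    rwa [haCrel k] at this
  have hessP2x : ∀ k (t : Fin d × Bool), ∀ y : EuclideanSpace ℝ (Fin d),
      (st k).aN < sg t.2 * y t.1 → sg t.2 * y t.1 ≤ (st (k+1)).bN →
      (∀ j, j ≠ t.1 → |y j| ≤ 2 * (sg t.2 * y t.1 - (st k).aN)) →
      y ∈ x ((st (k+1)).ess t) +ᵥ lam ((st (k+1)).ess t) • K := by
    intro k t y h1 h2 h3
    rw [hxeq _ (k+1) ((hstep k).hessmem t)]
    refine (hstep k).hessP2 t y ?_ h2 ?_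
    · rw [haCrel k]; exact h1
    · rw [haCrel k]; exact h3
  have hballx : ∀ k i0, (st (k+1)).lo = some i0 → ∀ y ∈ x i0 +ᵥ lam i0 • K,
      ((st k).E + 1 ≤ y j0) ∧ (∀ j, |y j| ≤ (st (k+1)).E ∧ |y j| + 1 ≤ (st (k+1)).aN) ∧
      (∀ j, j ≠ j0 → |y j| < (st k).aN) := by
    intro k i0 hlo y hy
    rw [hxeq _ (k+1) (((hstep k).hlo i0 hlo).1)] at hy
    have := (hstep k).hball i0 hlo y hy
    rwa [haCrel k] at this
  have hcube0x : ∀ y ∈ x 0 +ᵥ lam 0 • K, ∀ j, |y j| ≤ (st 0).E := by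
    intro y hy j
    rw [hxeq 0 0 h0mem] at hy
    exact hcube 0 0 h0mem y hy j
  have hcov0x : ∀ y : EuclideanSpace ℝ (Fin d), (∀ j, |y j| ≤ (st 0).bN) →
      y ∈ x 0 +ᵥ lam 0 • K := by
    intro y hy
    rw [hxeq 0 0 h0mem, hst0]
    apply hs0cov
    rw [← hst0]
    exact hy
  refine ⟨x, ?_, ?_⟩
  · -- coverage
    rw [Set.iUnion_eq_univ_iff]
    intro pt
    by_cases hin : ∀ j, |pt j| ≤ (st 0).bN
    · exact ⟨0, hcov0x pt hin⟩
    · push_neg at hin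
      obtain ⟨jbad, hjbad⟩ := hin
      obtain ⟨jm, _, hjm⟩ := Finset.exists_max_image (Finset.univ : Finset (Fin d))
        (fun j => |pt j|) ⟨j0, Finset.mem_univ _⟩
      set m := |pt jm| with hmdef
      have hm0 : (st 0).bN < m := lt_of_lt_of_le hjbad (hjm jbad (Finset.mem_univ _))
      have hex : ∃ k, m ≤ (st (k+1)).bN := by
        obtain ⟨n, hn⟩ := exists_nat_gt m
        refine ⟨n, ?_⟩
        have h1 := haNgrow (n+1)
        have h2 := habN (n+1)
        have h3 := haNpos 0
        push_cast at h1
        linarith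
      set k := Nat.find hex with hkdef
      have hk1 : m ≤ (st (k+1)).bN := Nat.find_spec hex
      have hk2 : (st k).bN < m := by
        rcases Nat.eq_zero_or_pos k with h | h
        · rw [h]; exact hm0
        · obtain ⟨k', hk'⟩ := Nat.exists_eq_succ_of_ne_zero h.ne'
          have := Nat.find_min hex (by omega : k' < k)
          rw [hk']
          push_neg at this
          exact this
      have hsgm : sg (decide (0 < pt jm)) * pt jm = m := by
        by_cases hp : 0 < pt jm
        · rw [hmdef, abs_of_pos hp]
          simp [sg, hp]
        · rw [hmdef, abs_of_nonpos (not_lt.mp hp)]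
          simp [sg, hp]
      refine ⟨(st (k+1)).ess (jm, decide (0 < pt jm)),
        hessP2x k (jm, decide (0 < pt jm)) pt ?_ ?_ ?_⟩
      · show (st k).aN < sg (decide (0 < pt jm)) * pt jm
        rw [hsgm]
        have h1 := haNpos k; have h2 := habN k
        linarith
      · show sg (decide (0 < pt jm)) * pt jm ≤ (st (k+1)).bN
        rw [hsgm]; exact hk1
      · intro j hj
        show |pt j| ≤ 2 * (sg (decide (0 < pt jm)) * pt jm - (st k).aN)
        rw [hsgm]
        have h1 := hjm j (Finset.mem_univ _)
        have h2 := habN k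
        linarith
  · -- multiplicity
    intro pt
    have hclass : ∀ i, pt ∈ x i +ᵥ lam i • K →
        (i = 0) ∨ (∃ k t, i = (st (k+1)).ess t) ∨ (∃ k, (st (k+1)).lo = some i) := by
      intro i _
      have hk0 := Nat.find_spec (htot i)
      set k0 := Nat.find (htot i) with hk0def
      rcases Nat.eq_zero_or_pos k0 with h | h
      · rw [h, hst0, hs0u] at hk0
        exact Or.inl (Finset.mem_singleton.mp hk0)
      · obtain ⟨k', hk'⟩ := Nat.exists_eq_succ_of_ne_zero h.ne'
        rw [hk'] at hk0
        have hnot : i ∉ (st k').u := fun hmem =>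
          Nat.find_min (htot i) (by omega : k' < k0) hmem
        rcases (hstep k').hunew i hk0 with h1 | ⟨t, h1⟩ | h1
        · exact absurd h1 hnot
        · exact Or.inr (Or.inl ⟨k', t, h1⟩)
        · exact Or.inr (Or.inr ⟨k', h1⟩)
    have hencard : ∀ (F : Finset ℕ), {i : ℕ | pt ∈ x i +ᵥ lam i • K} ⊆ ↑F →
        F.card ≤ 2*d → {i : ℕ | pt ∈ x i +ᵥ lam i • K}.encard ≤ ((2 * d : ℕ) : ℕ∞) := by
      intro F hsub hcard
      calc {i : ℕ | pt ∈ x i +ᵥ lam i • K}.encard ≤ (↑F : Set ℕ).encard :=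
            Set.encard_mono hsub
        _ = F.card := Set.encard_coe_eq_coe_finsetCard F
        _ ≤ ((2 * d : ℕ) : ℕ∞) := by exact_mod_cast hcard
    by_cases hb : ∃ k i0, (st (k+1)).lo = some i0 ∧ pt ∈ x i0 +ᵥ lam i0 • K
    · obtain ⟨k, i0, hlo, hpt⟩ := hb
      have hBf := hballx k i0 hlo pt hpt
      apply hencard {i0, (st (k+1)).ess (j0, true)}
      · intro i hi
        simp only [Set.mem_setOf_eq] at hi
        rcases hclass i hi with rfl | ⟨k', t, rfl⟩ | ⟨k', hlo'⟩
        · exfalso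
          have h1 := hcube0x pt hi j0
          have h2 := hEmono 0 k (Nat.zero_le k)
          have h3 := hBf.1
          have := le_abs_self (pt j0)
          linarith
        · have hE1 := hessP1x k' t pt hi
          have habs := sg_mul_le_abs t.2 (pt t.1)
          rcases lt_trichotomy k' k with hlt | rfl | hgt
          · exfalso
            have h1 := hE1.2 j0
            have h2 := hEmono (k'+1) k (by omega)
            have h3 := hBf.1
            have := le_abs_self (pt j0)
            linarith
          · have ht1 : t.1 = j0 := by
              by_contra hne'
              have h2 := hBf.2.2 t.1 hne'
              have h3 := hE1.1
              linarith
            have ht2 : t.2 = true := by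
              by_contra hne'
              have hfalse : t.2 = false := Bool.not_eq_true t.2 |>.mp hne'
              have h3 := hE1.1
              rw [hfalse] at h3
              simp only [sg, Bool.false_eq_true, if_false] at h3
              have h4 := hBf.1
              have h5 := hEpos k'
              have h6 := haNpos k'
              rw [ht1] at h3
              linarith
            have : t = (j0, true) := Prod.ext ht1 ht2
            rw [this]
            simp
          · exfalso
            have h1 := hE1.1
            have h2 := (hBf.2.1 t.1).2
            have h3 := haNmono (k+1) k' (by omega)
            linarith
        · rcases lt_trichotomy k' k with hlt | rfl | hgt
          · exfalso
            have hB2 := hballx k' i hlo' pt hi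
            have h1 := (hB2.2.1 j0).1
            have h2 := hEmono (k'+1) k (by omega)
            have h3 := hBf.1
            have := le_abs_self (pt j0)
            linarith
          · have : i = i0 := Option.some_inj.mp (hlo'.symm.trans hlo)
            rw [this]; simp
          · exfalso
            have hB2 := hballx k' i hlo' pt hi
            have h1 := hB2.1
            have h2 := (hBf.2.1 j0).1
            have h3 := hEmono (k+1) k' (by omega)
            have := le_abs_self (pt j0)
            linarith
      · have h1 : ({i0, (st (k+1)).ess (j0, true)} : Finset ℕ).card ≤ 2 := by
          apply le_trans (Finset.card_insert_le _ _)
          simp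
        omega
    · by_cases hc : pt ∈ x 0 +ᵥ lam 0 • K
      · apply hencard (insert 0 (Finset.image
          (fun j : Fin d => (st 1).ess (j, decide (0 < pt j))) Finset.univ))
        · intro i hi
          simp only [Set.mem_setOf_eq] at hi
          rcases hclass i hi with rfl | ⟨k', t, rfl⟩ | ⟨k', hlo'⟩
          · exact Finset.mem_insert_self _ _
          · have hE1 := hessP1x k' t pt hi
            have hcent := hcube0x pt hc
            have habs := sg_mul_le_abs t.2 (pt t.1)
            have hk'0 : k' = 0 := by
              by_contra h
              have hk1 : 1 ≤ k' := Nat.one_le_iff_ne_zero.mpr h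
              have h1 := haNmono 1 k' hk1
              have h2 := hanE 0
              have h3 := hE1.1
              have h4 := hcent t.1
              linarith
            subst hk'0
            have hσ : t.2 = decide (0 < pt t.1) := by
              apply sg_det
              have := haNpos 0
              linarith [hE1.1]
            apply Finset.mem_insert_of_mem
            apply Finset.mem_image.mpr
            refine ⟨t.1, Finset.mem_univ _, ?_⟩
            congr 1
            rw [← hσ]
          · exact absurd ⟨k', i, hlo', hi⟩ hb
        · calc (insert 0 (Finset.image
              (fun j : Fin d => (st 1).ess (j, decide (0 < pt j))) Finset.univ)).card
              ≤ (Finset.image (fun j : Fin d => (st 1).ess (j, decide (0 < pt j)))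
                  Finset.univ).card + 1 := Finset.card_insert_le _ _
            _ ≤ d + 1 := by
                have := Finset.card_image_le (f := fun j : Fin d =>
                  (st 1).ess (j, decide (0 < pt j))) (s := Finset.univ)
                simp only [Finset.card_univ, Fintype.card_fin] at this
                omega
            _ ≤ 2 * d := by omega
      · by_cases hQ : ∃ k, ∃ t : Fin d × Bool,
            pt ∈ x ((st (k+1)).ess t) +ᵥ lam ((st (k+1)).ess t) • K
        · set m := Nat.find hQ with hmdef
          obtain ⟨t0, ht0⟩ := Nat.find_spec hQ
          have hcubem : ∀ j, |pt j| ≤ (st (m+1)).E := (hessP1x m t0 pt ht0).2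
          apply hencard (Finset.image (fun q : Fin d × Bool =>
            (st ((if q.2 then m else m + 1) + 1)).ess (q.1, decide (0 < pt q.1))) Finset.univ)
          · intro i hi
            simp only [Set.mem_setOf_eq] at hi
            rcases hclass i hi with rfl | ⟨k', t, rfl⟩ | ⟨k', hlo'⟩
            · exact absurd hi hc
            · have hE1 := hessP1x k' t pt hi
              have habs := sg_mul_le_abs t.2 (pt t.1)
              have hm_le : m ≤ k' := Nat.find_min' hQ ⟨t, hi⟩
              have hk'le : k' ≤ m + 1 := by
                by_contra h
                push_neg at h
                obtain ⟨e, he⟩ := Nat.exists_eq_add_of_le h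
                have h1 := hanE (m + 1 + e)
                have h2 := hEmono (m+1) (m+1+e) (by omega)
                have h3 := hE1.1
                have h4 := hcubem t.1
                have h5 : (st (m+1+e+1)).aN ≤ (st k').aN := by
                  apply haNmono
                  omega
                linarith
              have hσ : t.2 = decide (0 < pt t.1) := by
                apply sg_det
                have := haNpos k'
                linarith [hE1.1]
              apply Finset.mem_image.mpr
              rcases eq_or_lt_of_le hm_le with rfl | hlt
              · refine ⟨(t.1, true), Finset.mem_univ _, ?_⟩
                simp only [if_pos rfl]
                congr 1
                rw [← hσ]
              · have hk' : k' = m + 1 := by omega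
                refine ⟨(t.1, false), Finset.mem_univ _, ?_⟩
                simp only [Bool.false_eq_true, if_false]
                rw [← hk']
                congr 1
                rw [← hσ]
            · exact absurd ⟨k', i, hlo', hi⟩ hb
          · calc (Finset.image (fun q : Fin d × Bool =>
                (st ((if q.2 then m else m + 1) + 1)).ess (q.1, decide (0 < pt q.1)))
                Finset.univ).card
                ≤ (Finset.univ : Finset (Fin d × Bool)).card := Finset.card_image_le
              _ = 2 * d := by
                  simp [Finset.card_univ, Fintype.card_prod, Fintype.card_fin]
                  omega
        · apply hencard ∅
          · intro i hi
            simp only [Set.mem_setOf_eq] at hi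
            rcases hclass i hi with rfl | ⟨k', t, rfl⟩ | ⟨k', hlo'⟩
            · exact absurd hi hc
            · exact absurd ⟨k', t, hi⟩ hQ
            · exact absurd ⟨k', i, hlo', hi⟩ hb
          · simp
end

section
/- Let X be a finite nonempty set and let F be a finite family of subsets of X such that every point of X belongs to at least one member of F. Let τ* = τ*(F) denote the fractional covering number and, for a positive integer k, let τ_k = τ_k(F) denote the k-fold covering number of F. Then τ_k ≤ ⌈τ*·(k + (3/2)·ln|X| + (3/2)·√((4k + ln|X|)·ln|X|))⌉ ≤ ⌈6·τ*·max{ln|X|, k}⌉. -/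
open scoped Classical

/-- The fractional covering number `τ*(F)` of a finite family `F` of subsets of a finite
base set `X`: the infimum of total weights of fractional coverings of `X` by `F`. -/
noncomputable def fracCovNum {X : Type*} [Fintype X] (F : Finset (Set X)) : ℝ :=
  sInf {t : ℝ | ∃ w : Set X → ℝ, (∀ S, 0 ≤ w S) ∧
    (∀ x : X, 1 ≤ ∑ S ∈ F, if x ∈ S then w S else 0) ∧ t = ∑ S ∈ F, w S}

/-- The `k`-fold covering number `τ_k(F)`: the minimum size of a multisubfamily of `F`
covering every point of `X` at least `k` times (with multiplicity). -/
noncomputable def kCovNum {X : Type*} [Fintype X] (F : Finset (Set X)) (k : ℕ) : ℕ :=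
  sInf {n : ℕ | ∃ f : Fin n → Set X, (∀ i, f i ∈ F) ∧
    ∀ x : X, k ≤ {i | x ∈ f i}.ncard}

lemma exp_neg_le_quad {s : ℝ} (hs : 0 ≤ s) : Real.exp (-s) ≤ 1 - s + s ^ 2 / 2 := by
  have h1 : 1 + s + s ^ 2 / 2 ≤ Real.exp s := by
    have := Real.sum_le_exp_of_nonneg hs 3
    simp [Finset.sum_range_succ] at this
    nlinarith [this]
  have hE : Real.exp (-s) * Real.exp s = 1 := by
    rw [← Real.exp_add]; simp
  nlinarith [Real.exp_pos s, Real.exp_pos (-s), sq_nonneg s, sq_nonneg (s * s)]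

lemma key_lemma {X : Type*} [Fintype X] [Nonempty X] (F : Finset (Set X)) (k N : ℕ)
    (w : Set X → ℝ) (hw0 : ∀ S, 0 ≤ w S)
    (hwc : ∀ x : X, 1 ≤ ∑ S ∈ F, if x ∈ S then w S else 0)
    (s : ℝ) (hs : 0 ≤ s)
    (hlt : (Fintype.card X : ℝ) *
      Real.exp (s * ((k : ℝ) - 1) - ((N : ℝ) / (∑ S ∈ F, w S)) * (s - s ^ 2 / 2)) < 1) :
    kCovNum F k ≤ N := by
  classical
  set W : ℝ := ∑ S ∈ F, w S with hWdef
  obtain ⟨x₀⟩ := ‹Nonempty X›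
  have hW1 : 1 ≤ W := le_trans (hwc x₀) (Finset.sum_le_sum fun S _ => by
    split <;> simp [hw0])
  have hWpos : 0 < W := by linarith only [hW1]
  set p : Set X → ℝ := fun S => w S / W with hpdef
  have hp0 : ∀ S, 0 ≤ p S := fun S => div_nonneg (hw0 S) hWpos.le
  have hpsum : ∑ S ∈ F, p S = 1 := by
    simp only [hpdef, ← Finset.sum_div]
    exact div_self (ne_of_gt hWpos)
  set Ω := Fintype.piFinset (fun _ : Fin N => F) with hΩ
  set P : (Fin N → Set X) → ℝ := fun f => ∏ i, p (f i) with hPdef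
  have hP0 : ∀ f, 0 ≤ P f := fun f => Finset.prod_nonneg fun i _ => hp0 _
  have hPsum : ∑ f ∈ Ω, P f = 1 := by
    rw [hΩ, hPdef, Finset.sum_prod_piFinset]
    simp [hpsum]
  set c : X → (Fin N → Set X) → ℕ := fun x f => (Finset.univ.filter fun i => x ∈ f i).card
    with hcdef
  set μ : ℝ := (N : ℝ) / W with hμdef
  have hμ0 : 0 ≤ μ := div_nonneg (Nat.cast_nonneg N) hWpos.le
  have hBx : ∀ x : X, ∑ f ∈ Ω, P f * (if c x f < k then (1:ℝ) else 0)
      ≤ Real.exp (s * ((k:ℝ)-1) - μ * (s - s ^ 2 / 2)) := by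
    intro x
    set q : ℝ := ∑ S ∈ F, p S * (if x ∈ S then Real.exp (-s) else 1) with hq
    have hq0 : 0 ≤ q :=
      Finset.sum_nonneg fun S _ => mul_nonneg (hp0 S) (by split <;> positivity)
    have ha : ∀ f, P f * (if c x f < k then (1:ℝ) else 0)
        ≤ Real.exp (s * ((k:ℝ)-1)) * (P f * Real.exp (-s * (c x f))) := by
      intro f
      by_cases h : c x f < k
      · rw [if_pos h, mul_one]
        have h1 : (c x f : ℝ) ≤ (k:ℝ) - 1 := by
          have : (c x f : ℝ) + 1 ≤ k := by exact_mod_cast h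
          linarith
        have h2 : (1:ℝ) ≤ Real.exp (s * ((k:ℝ)-1)) * Real.exp (-s * c x f) := by
          rw [← Real.exp_add]
          refine Real.one_le_exp ?_
          nlinarith
        nlinarith only [hP0 f, h2]
      · rw [if_neg h, mul_zero]
        exact mul_nonneg (Real.exp_pos _).le (mul_nonneg (hP0 f) (Real.exp_pos _).le)
    have hb : ∑ f ∈ Ω, P f * Real.exp (-s * (c x f)) = q ^ N := by
      have hterm : ∀ f : Fin N → Set X, P f * Real.exp (-s * (c x f))
          = ∏ i, (p (f i) * (if x ∈ f i then Real.exp (-s) else 1)) := by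
        intro f
        rw [Finset.prod_mul_distrib]
        congr 1
        have hcs : (-s * (c x f) : ℝ) = ∑ i : Fin N, (if x ∈ f i then -s else 0) := by
          rw [hcdef]
          simp only [Finset.card_filter]
          push_cast
          rw [Finset.mul_sum]
          exact Finset.sum_congr rfl fun i _ => by split <;> simp
        rw [hcs, Real.exp_sum]
        exact Finset.prod_congr rfl fun i _ => by split <;> simp
      rw [Finset.sum_congr rfl fun f _ => hterm f, hΩ,
        Finset.sum_prod_piFinset F (fun (_ : Fin N) S => p S * (if x ∈ S then Real.exp (-s) else 1))]
      rw [← hq, Finset.prod_const, Finset.card_univ, Fintype.card_fin]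
    have hqe : q ≤ 1 + (-(1 - Real.exp (-s)) / W) := by
      have hes : Real.exp (-s) ≤ 1 := by
        rw [show (1:ℝ) = Real.exp 0 by simp]
        exact Real.exp_le_exp.mpr (by linarith)
      have hpx : 1 / W ≤ ∑ S ∈ F, (if x ∈ S then p S else 0) := by
        have : ∑ S ∈ F, (if x ∈ S then p S else 0)
            = (∑ S ∈ F, if x ∈ S then w S else 0) / W := by
          rw [Finset.sum_div]
          exact Finset.sum_congr rfl fun S _ => by split <;> simp [hpdef]
        rw [this]
        exact (div_le_div_iff_of_pos_right hWpos).mpr (hwc x)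
      have hqval : q = (∑ S ∈ F, p S)
          - (1 - Real.exp (-s)) * ∑ S ∈ F, (if x ∈ S then p S else 0) := by
        rw [hq, Finset.mul_sum, ← Finset.sum_sub_distrib]
        exact Finset.sum_congr rfl fun S _ => by split <;> ring
      rw [hpsum] at hqval
      rw [hqval]
      have h1e : 0 ≤ 1 - Real.exp (-s) := by linarith
      have := mul_le_mul_of_nonneg_left hpx h1e
      have hrw : -(1 - Real.exp (-s)) / W = -((1 - Real.exp (-s)) * (1 / W)) := by ring
      rw [hrw]
      linarith only [this]
    have hqexp : q ≤ Real.exp (-(1 - Real.exp (-s)) / W) :=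
      le_trans hqe (by linarith only [Real.add_one_le_exp (-(1 - Real.exp (-s)) / W)])
    have hd : q ^ N ≤ Real.exp ((N : ℝ) * (-(1 - Real.exp (-s)) / W)) := by
      calc q ^ N ≤ (Real.exp (-(1 - Real.exp (-s)) / W)) ^ N := pow_le_pow_left₀ hq0 hqexp N
        _ = Real.exp ((N : ℝ) * (-(1 - Real.exp (-s)) / W)) := (Real.exp_nat_mul _ N).symm
    calc ∑ f ∈ Ω, P f * (if c x f < k then (1:ℝ) else 0)
        ≤ ∑ f ∈ Ω, Real.exp (s * ((k:ℝ)-1)) * (P f * Real.exp (-s * (c x f))) :=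
          Finset.sum_le_sum fun f _ => ha f
      _ = Real.exp (s * ((k:ℝ)-1)) * ∑ f ∈ Ω, P f * Real.exp (-s * (c x f)) := by
          rw [Finset.mul_sum]
      _ = Real.exp (s * ((k:ℝ)-1)) * q ^ N := by rw [hb]
      _ ≤ Real.exp (s * ((k:ℝ)-1)) * Real.exp ((N : ℝ) * (-(1 - Real.exp (-s)) / W)) :=
          mul_le_mul_of_nonneg_left hd (Real.exp_pos _).le
      _ = Real.exp (s * ((k:ℝ)-1) - μ * (1 - Real.exp (-s))) := by
          rw [← Real.exp_add]
          congr 1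
          rw [hμdef]
          ring
      _ ≤ Real.exp (s * ((k:ℝ)-1) - μ * (s - s ^ 2 / 2)) := by
          refine Real.exp_le_exp.mpr ?_
          have h1 : s - s ^ 2 / 2 ≤ 1 - Real.exp (-s) := by
            have := exp_neg_le_quad hs
            linarith only [this]
          nlinarith only [h1, hμ0]
  have hex : ∃ f ∈ Ω, ∀ x : X, k ≤ c x f := by
    by_contra hbad
    push_neg at hbad
    have h1 : (1:ℝ) ≤ ∑ f ∈ Ω, P f * ∑ x : X, (if c x f < k then (1:ℝ) else 0) := by
      calc (1:ℝ) = ∑ f ∈ Ω, P f := hPsum.symm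
        _ ≤ _ := by
          refine Finset.sum_le_sum fun f hf => ?_
          obtain ⟨x, hx⟩ := hbad f hf
          refine le_mul_of_one_le_right (hP0 f) ?_
          have := Finset.single_le_sum (f := fun y : X => if c y f < k then (1:ℝ) else 0)
            (fun y _ => by split <;> norm_num) (Finset.mem_univ x)
          simpa [hx] using this
    have h2 : ∑ f ∈ Ω, P f * ∑ x : X, (if c x f < k then (1:ℝ) else 0)
        = ∑ x : X, ∑ f ∈ Ω, P f * (if c x f < k then (1:ℝ) else 0) := by
      simp_rw [Finset.mul_sum]
      exact Finset.sum_comm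
    have h3 : ∑ x : X, ∑ f ∈ Ω, P f * (if c x f < k then (1:ℝ) else 0)
        ≤ (Fintype.card X : ℝ) * Real.exp (s * ((k:ℝ)-1) - μ * (s - s ^ 2 / 2)) := by
      calc _ ≤ ∑ _x : X, Real.exp (s * ((k:ℝ)-1) - μ * (s - s ^ 2 / 2)) :=
            Finset.sum_le_sum fun x _ => hBx x
        _ = _ := by rw [Finset.sum_const, Finset.card_univ, nsmul_eq_mul]
    linarith only [h1, h2, h3, hlt]
  obtain ⟨f, hfΩ, hfc⟩ := hex
  refine Nat.sInf_le ⟨f, fun i => (Fintype.mem_piFinset.mp hfΩ) i, fun x => ?_⟩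
  have hset : {i | x ∈ f i} = ↑(Finset.univ.filter fun i => x ∈ f i) := by ext i; simp
  rw [hset, Set.ncard_coe_finset]
  exact hfc x
set_option maxHeartbeats 1600000 in
theorem stmt12 (X : Type*) [Fintype X] [Nonempty X] (F : Finset (Set X))
    (hcov : ∀ x : X, ∃ S ∈ F, x ∈ S) (k : ℕ) (hk : 0 < k) :
    (kCovNum F k : ℝ) ≤
      (⌈fracCovNum F * (k + 3 / 2 * Real.log (Fintype.card X) +
        3 / 2 * Real.sqrt ((4 * k + Real.log (Fintype.card X)) *
          Real.log (Fintype.card X)))⌉ : ℤ) ∧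
    (⌈fracCovNum F * (k + 3 / 2 * Real.log (Fintype.card X) +
        3 / 2 * Real.sqrt ((4 * k + Real.log (Fintype.card X)) *
          Real.log (Fintype.card X)))⌉ : ℤ) ≤
      ⌈6 * fracCovNum F * max (Real.log (Fintype.card X)) (k : ℝ)⌉ := by
  classical
  obtain ⟨x₀⟩ := ‹Nonempty X›
  set n : ℕ := Fintype.card X with hn
  have hn1 : 1 ≤ n := Fintype.card_pos
  have hnpos : (0:ℝ) < n := by exact_mod_cast hn1
  set L : ℝ := Real.log n with hLdef
  have hL : 0 ≤ L := Real.log_nonneg (by exact_mod_cast hn1)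
  set Sq : ℝ := Real.sqrt ((4 * k + L) * L) with hSqdef
  have hSq0 : 0 ≤ Sq := Real.sqrt_nonneg _
  have hSq2 : Sq ^ 2 = (4 * k + L) * L :=
    Real.sq_sqrt (mul_nonneg (add_nonneg (by positivity) hL) hL)
  clear_value Sq
  have hk1 : (1:ℝ) ≤ (k:ℝ) := by exact_mod_cast hk
  set A : Set ℝ := {t : ℝ | ∃ w : Set X → ℝ, (∀ S, 0 ≤ w S) ∧
    (∀ x : X, 1 ≤ ∑ S ∈ F, if x ∈ S then w S else 0) ∧ t = ∑ S ∈ F, w S} with hA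
  have hτA : fracCovNum F = sInf A := rfl
  set τ : ℝ := fracCovNum F with hτdef
  have hAne : A.Nonempty := by
    refine ⟨∑ S ∈ F, (1:ℝ), fun _ => (1:ℝ), fun S => zero_le_one, fun x => ?_, rfl⟩
    obtain ⟨S₀, hS₀F, hxS₀⟩ := hcov x
    have := Finset.single_le_sum (f := fun S : Set X => if x ∈ S then (1:ℝ) else 0)
      (fun S _ => by split <;> norm_num) hS₀F
    simpa [hxS₀] using this
  have hALB : ∀ a ∈ A, (1:ℝ) ≤ a := by
    rintro a ⟨w, hw0, hwc, rfl⟩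
    exact le_trans (hwc x₀) (Finset.sum_le_sum fun S _ => by split <;> simp [hw0])
  have hbdd : BddBelow A := ⟨1, hALB⟩
  have hτ1 : 1 ≤ τ := by rw [hτA]; exact le_csInf hAne hALB
  clear_value τ
  set t : ℝ := (k : ℝ) + 3 / 2 * L + 3 / 2 * Sq with htdef
  have ht1 : 1 ≤ t := by
    rw [htdef]
    linarith only [hk1, hL, hSq0]
  have htpos : 0 < t := by linarith only [ht1]
  clear_value t
  have hτt1 : 1 ≤ τ * t := by nlinarith only [hτ1, ht1]
  have hC1 : (1:ℤ) ≤ ⌈τ * t⌉ := by exact_mod_cast le_trans hτt1 (Int.le_ceil _)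
  set N : ℕ := (⌈τ * t⌉).toNat with hNdef
  have hNceil : (N:ℝ) = ((⌈τ * t⌉ : ℤ) : ℝ) := by
    have h : ((⌈τ * t⌉.toNat : ℤ) : ℝ) = ((⌈τ * t⌉ : ℤ) : ℝ) := by
      rw [Int.toNat_of_nonneg (by linarith only [hC1])]
    rw [hNdef]
    exact_mod_cast h
  have hNlo : τ * t ≤ (N:ℝ) := by rw [hNceil]; exact Int.le_ceil _
  have hNhi : (N:ℝ) ≤ τ * t + 1 := by rw [hNceil]; exact (Int.ceil_lt_add_one _).le
  clear_value N
  set ε : ℝ := 1 / (2 * t) with hεdef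
  have hε : 0 < ε := by rw [hεdef]; positivity
  have hεt : ε * t = 1 / 2 := by rw [hεdef]; field_simp
  clear_value ε
  obtain ⟨Wv, hWvA, hWvlt⟩ : ∃ a ∈ A, a < τ + ε :=
    exists_lt_of_csInf_lt hAne (show sInf A < τ + ε by rw [← hτA]; linarith only [hε])
  have hWvge : τ ≤ Wv := by rw [hτA]; exact csInf_le hbdd hWvA
  obtain ⟨w, hw0, hwc, hWveq⟩ := hWvA
  have hWv1 : 1 ≤ Wv := le_trans hτ1 hWvge
  have hWvpos : 0 < Wv := by linarith only [hWv1]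
  set μ : ℝ := (N : ℝ) / Wv with hμdef
  have hμ0 : 0 ≤ μ := div_nonneg (Nat.cast_nonneg N) hWvpos.le
  have hμW : μ * Wv = (N : ℝ) := div_mul_cancel₀ _ (ne_of_gt hWvpos)
  clear_value μ
  have hμlo : t - 1/2 ≤ μ := by
    have ha := mul_nonneg hμ0 (by linarith only [hWvlt] : (0:ℝ) ≤ τ + ε - Wv)
    have h1 : τ * t ≤ μ * (τ + ε) := by linarith only [ha, hμW, hNlo]
    have h2 : (t - 1/2) * (τ + ε) ≤ τ * t := by linarith only [hεt, hτ1, hε.le]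
    exact le_of_mul_le_mul_right (by linarith only [h1, h2])
      (by linarith only [hτ1, hε] : (0:ℝ) < τ + ε)
  have hμhi : μ ≤ t + 1 := by
    have ha := mul_nonneg hμ0 (by linarith only [hWvge] : (0:ℝ) ≤ Wv - τ)
    have h1 : μ * τ ≤ (t + 1) * τ := by linarith only [ha, hμW, hNhi, hτ1]
    exact le_of_mul_le_mul_right h1 (by linarith only [hτ1] : (0:ℝ) < τ)
  have hμlo' : (k:ℝ) + 3/2 * L + 3/2 * Sq - 1/2 ≤ μ := by rw [htdef] at hμlo; linarith only [hμlo]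
  have hμhi' : μ ≤ (k:ℝ) + 3/2 * L + 3/2 * Sq + 1 := by rw [htdef] at hμhi; linarith only [hμhi]
  have hμk : (k:ℝ) - 1 < μ := by linarith only [hμlo', hL, hSq0]
  have hμpos : 0 < μ := by linarith only [hμk, hk1]
  set s : ℝ := (μ - ((k:ℝ) - 1)) / μ with hsdef
  have hs0 : 0 ≤ s := div_nonneg (by linarith only [hμk]) hμpos.le
  clear_value s
  have hd2 : 2 * L * μ < (μ - ((k:ℝ) - 1))^2 := by
    have hd0 : (0:ℝ) ≤ 3/2 * L + 3/2 * Sq + 1/2 := by linarith only [hL, hSq0]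
    have hstep1 : (3/2 * L + 3/2 * Sq + 1/2)^2 ≤ (μ - ((k:ℝ) - 1))^2 :=
      pow_le_pow_left₀ hd0 (by linarith only [hμlo']) 2
    have hstep2 : 2 * L * μ ≤ 2 * L * ((k:ℝ) + 3/2 * L + 3/2 * Sq + 1) :=
      mul_le_mul_of_nonneg_left hμhi' (by linarith only [hL])
    have hstep3 : 2 * L * ((k:ℝ) + 3/2 * L + 3/2 * Sq + 1)
        < (3/2 * L + 3/2 * Sq + 1/2)^2 := by
      linarith only [hSq2, mul_nonneg hL hL, mul_nonneg (sub_nonneg.mpr hk1) hL,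
        mul_nonneg hL hSq0, hL, hSq0]
    linarith only [hstep1, hstep2, hstep3]
  have hkey : s * ((k:ℝ) - 1) - μ * (s - s^2/2) < -L := by
    have hform : s * ((k:ℝ) - 1) - μ * (s - s^2/2)
        = -((μ - ((k:ℝ) - 1))^2) / (2 * μ) := by
      rw [hsdef]; field_simp; ring
    rw [hform, neg_div, neg_lt_neg_iff, lt_div_iff₀ (by linarith only [hμpos] : (0:ℝ) < 2 * μ)]
    linarith only [hd2]
  have hlt2 : ((Fintype.card X : ℕ) : ℝ) *
      Real.exp (s * ((k : ℝ) - 1) - ((N : ℝ) / (∑ S ∈ F, w S)) * (s - s ^ 2 / 2)) < 1 := by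
    rw [← hWveq, ← hμdef, ← hn]
    calc (n:ℝ) * Real.exp (s * ((k:ℝ) - 1) - μ * (s - s^2/2))
        < (n:ℝ) * Real.exp (-L) :=
          mul_lt_mul_of_pos_left (Real.exp_lt_exp.mpr hkey) hnpos
      _ = 1 := by
          rw [hLdef, Real.exp_neg, Real.exp_log hnpos, mul_inv_cancel₀ (ne_of_gt hnpos)]
  have hcovN : kCovNum F k ≤ N := key_lemma F k N w hw0 hwc s hs0 hlt2
  constructor
  · calc (kCovNum F k : ℝ) ≤ (N : ℝ) := by exact_mod_cast hcovN
      _ = _ := hNceil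
  · refine Int.ceil_le_ceil ?_
    have hMk : (k:ℝ) ≤ max L (k:ℝ) := le_max_right _ _
    have hML : L ≤ max L (k:ℝ) := le_max_left _ _
    have hM0 : (0:ℝ) ≤ max L (k:ℝ) := le_trans hL hML
    have hSqM : Sq ≤ 7/3 * max L (k:ℝ) := by
      rw [hSqdef]
      have h1 : (4 * k + L) * L ≤ (7/3 * max L (k:ℝ))^2 := by
        linarith only [mul_nonneg (sub_nonneg.mpr hML) hL,
          mul_nonneg (sub_nonneg.mpr hMk) hL, hL, hM0,
          mul_nonneg (sub_nonneg.mpr hML) hM0, mul_nonneg (sub_nonneg.mpr hMk) hM0,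
          mul_nonneg hM0 hM0]
      calc Real.sqrt ((4 * k + L) * L) ≤ Real.sqrt ((7/3 * max L (k:ℝ))^2) :=
            Real.sqrt_le_sqrt h1
        _ = 7/3 * max L (k:ℝ) := Real.sqrt_sq (by positivity)
    have ht6 : t ≤ 6 * max L (k:ℝ) := by rw [htdef]; linarith only [hSqM, hMk, hML]
    calc τ * t ≤ τ * (6 * max L (k:ℝ)) :=
          mul_le_mul_of_nonneg_left ht6 (by linarith only [hτ1])
      _ = 6 * τ * max L (k:ℝ) := by ring
end

section
/- Let K, L, T be bounded Borel measurable sets in ℝ^d with L nonempty, let Λ ⊂ ℝ^d be a nonempty finite set with L ⊆ Λ + T, and let k be a positive integer. Assume N*(L − T, K ∼ T) < ∞, where L − T = {l − t : l ∈ L, t ∈ T}. Then N_k(L, K) ≤ ⌈6·N*(L − T, K ∼ T)·max{ln|Λ|, k}⌉. -/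
open MeasureTheory Pointwise Set
open scoped ENNReal NNReal Classical

/-- `N_k(L, K)`: the minimum number of translates of `K` needed to cover every point of `L`
at least `k` times (with multiplicity); `⊤` if no finite such family exists. -/
noncomputable def NkCov {d : ℕ} (L K : Set (EuclideanSpace ℝ (Fin d))) (k : ℕ) : ℕ∞ :=
  ⨅ (m : ℕ) (_ : ∃ x : Fin m → EuclideanSpace ℝ (Fin d),
      ∀ p ∈ L, k ≤ {i | p ∈ x i +ᵥ K}.ncard), (m : ℕ∞)

/-- `N*(L, K)`: the fractional covering number of `L` by translates of `K`, i.e. the infimum of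
total weights of finitely supported weightings of translation vectors such that every point of
`L` is fractionally covered; `⊤` if no such weighting exists. -/
noncomputable def fracCovNumE {d : ℕ} (L K : Set (EuclideanSpace ℝ (Fin d))) : ℝ≥0∞ :=
  ⨅ (s : Finset (EuclideanSpace ℝ (Fin d))) (w : EuclideanSpace ℝ (Fin d) → ℝ≥0)
    (_ : ∀ p ∈ L, 1 ≤ ∑ x ∈ s, if p ∈ x +ᵥ K then (w x : ℝ) else 0),
    ∑ x ∈ s, (w x : ℝ≥0∞)

/-- The erosion `K ∼ T = {x : x + T ⊆ K}`. -/
def erode {d : ℕ} (K T : Set (EuclideanSpace ℝ (Fin d))) : Set (EuclideanSpace ℝ (Fin d)) :=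
  {x | x +ᵥ T ⊆ K}

namespace Stmt13Aux

variable {d : ℕ}

/-- Number of elements of the list `l` whose `KT`-translate contains `a`. -/
noncomputable def cnt (KT : Set (EuclideanSpace ℝ (Fin d)))
    (l : List (EuclideanSpace ℝ (Fin d))) (a : EuclideanSpace ℝ (Fin d)) : ℕ :=
  ∑ i : Fin l.length, if a ∈ l.get i +ᵥ KT then 1 else 0

/-- Exponential potential. -/
noncomputable def pot (KT : Set (EuclideanSpace ℝ (Fin d)))
    (Λ' : Finset (EuclideanSpace ℝ (Fin d))) (l : List (EuclideanSpace ℝ (Fin d))) : ℝ :=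
  ∑ a ∈ Λ', (2⁻¹ : ℝ) ^ cnt KT l a

lemma cnt_cons (KT : Set (EuclideanSpace ℝ (Fin d))) (x : EuclideanSpace ℝ (Fin d))
    (l : List (EuclideanSpace ℝ (Fin d))) (a : EuclideanSpace ℝ (Fin d)) :
    cnt KT (x :: l) a = (if a ∈ x +ᵥ KT then 1 else 0) + cnt KT l a := by
  show (∑ i : Fin (l.length + 1), if a ∈ (x :: l).get i +ᵥ KT then 1 else 0) = _
  rw [Fin.sum_univ_succ]
  rfl

lemma cnt_eq_ncard (KT : Set (EuclideanSpace ℝ (Fin d)))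
    (l : List (EuclideanSpace ℝ (Fin d))) (a : EuclideanSpace ℝ (Fin d)) :
    {i : Fin l.length | a ∈ l.get i +ᵥ KT}.ncard = cnt KT l a := by
  have h : {i : Fin l.length | a ∈ l.get i +ᵥ KT}
      = ↑(Finset.univ.filter fun i : Fin l.length => a ∈ l.get i +ᵥ KT) := by
    ext i; simp
  rw [h, Set.ncard_coe_finset, Finset.card_filter]
  rfl

lemma pot_nil (KT : Set (EuclideanSpace ℝ (Fin d))) (Λ' : Finset (EuclideanSpace ℝ (Fin d))) :
    pot KT Λ' [] = (Λ'.card : ℝ) := by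
  simp [pot, cnt]

lemma pot_cons (KT : Set (EuclideanSpace ℝ (Fin d))) (Λ' : Finset (EuclideanSpace ℝ (Fin d)))
    (x : EuclideanSpace ℝ (Fin d)) (l : List (EuclideanSpace ℝ (Fin d))) :
    pot KT Λ' (x :: l)
      = ∑ a ∈ Λ', (if a ∈ x +ᵥ KT then (2⁻¹ : ℝ) else 1) * 2⁻¹ ^ cnt KT l a := by
  unfold pot
  refine Finset.sum_congr rfl fun a _ => ?_
  rw [cnt_cons, pow_add]
  split <;> simp

/-- The key greedy step: some translate from the support reduces the potential
by a factor `1 - 1/(2W)`. -/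
lemma step (KT : Set (EuclideanSpace ℝ (Fin d))) (Λ' : Finset (EuclideanSpace ℝ (Fin d)))
    (s : Finset (EuclideanSpace ℝ (Fin d))) (w : EuclideanSpace ℝ (Fin d) → ℝ≥0)
    (hw : ∀ a ∈ Λ', (1 : ℝ) ≤ ∑ x ∈ s, if a ∈ x +ᵥ KT then (w x : ℝ) else 0)
    (x₀ : EuclideanSpace ℝ (Fin d)) (hx₀ : x₀ ∈ s) (hwx₀ : 0 < (w x₀ : ℝ))
    (W : ℝ) (hW : W = ∑ x ∈ s, (w x : ℝ)) (h1W : 1 ≤ W)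
    (l : List (EuclideanSpace ℝ (Fin d))) :
    ∃ x ∈ s, pot KT Λ' (x :: l) ≤ (1 - 1 / (2 * W)) * pot KT Λ' l := by
  by_contra hcon
  push_neg at hcon
  have hWpos : (0 : ℝ) < W := lt_of_lt_of_le one_pos h1W
  have hub : ∑ x ∈ s, (w x : ℝ) * pot KT Λ' (x :: l) ≤ (W - 2⁻¹) * pot KT Λ' l := by
    have h1 : ∑ x ∈ s, (w x : ℝ) * pot KT Λ' (x :: l)
        = ∑ a ∈ Λ', (∑ x ∈ s, (w x : ℝ) * (if a ∈ x +ᵥ KT then (2⁻¹ : ℝ) else 1))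
            * 2⁻¹ ^ cnt KT l a := by
      simp_rw [pot_cons, Finset.mul_sum]
      rw [Finset.sum_comm]
      refine Finset.sum_congr rfl fun a _ => ?_
      rw [Finset.sum_mul]
      exact Finset.sum_congr rfl fun x _ => by ring
    rw [h1]
    have h2 : ∀ a ∈ Λ',
        (∑ x ∈ s, (w x : ℝ) * (if a ∈ x +ᵥ KT then (2⁻¹ : ℝ) else 1)) ≤ W - 2⁻¹ := by
      intro a ha
      have h3 : ∑ x ∈ s, (w x : ℝ) * (if a ∈ x +ᵥ KT then (2⁻¹ : ℝ) else 1)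
          = W - 2⁻¹ * ∑ x ∈ s, (if a ∈ x +ᵥ KT then (w x : ℝ) else 0) := by
        rw [hW, Finset.mul_sum, ← Finset.sum_sub_distrib]
        refine Finset.sum_congr rfl fun x _ => ?_
        split <;> ring
      rw [h3]
      nlinarith [hw a ha]
    have h4 : ∑ a ∈ Λ', (W - 2⁻¹) * 2⁻¹ ^ cnt KT l a = (W - 2⁻¹) * pot KT Λ' l := by
      simp [pot, Finset.mul_sum]
    refine le_trans (Finset.sum_le_sum fun a ha => ?_) (le_of_eq h4)
    exact mul_le_mul_of_nonneg_right (h2 a ha) (by positivity)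
  have heq : W * ((1 - 1 / (2 * W)) * pot KT Λ' l) = (W - 2⁻¹) * pot KT Λ' l := by
    have hW0 : W ≠ 0 := hWpos.ne'
    field_simp
  have hlb : W * ((1 - 1 / (2 * W)) * pot KT Λ' l)
      < ∑ x ∈ s, (w x : ℝ) * pot KT Λ' (x :: l) := by
    set c := (1 - 1 / (2 * W)) * pot KT Λ' l with hc
    rw [hW, Finset.sum_mul]
    refine Finset.sum_lt_sum (fun x hx => mul_le_mul_of_nonneg_left (hcon x hx).le
      (w x).coe_nonneg) ⟨x₀, hx₀, ?_⟩
    exact mul_lt_mul_of_pos_left (hcon x₀ hx₀) hwx₀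
  rw [heq] at hlb
  exact absurd hub (not_le.mpr hlb)

end Stmt13Aux

set_option maxHeartbeats 2000000 in
theorem stmt13 (d : ℕ) (K L T : Set (EuclideanSpace ℝ (Fin d)))
    (hKb : Bornology.IsBounded K) (hLb : Bornology.IsBounded L)
    (hTb : Bornology.IsBounded T)
    (hKm : MeasurableSet K) (hLm : MeasurableSet L) (hTm : MeasurableSet T)
    (hLne : L.Nonempty)
    (Λ : Finset (EuclideanSpace ℝ (Fin d))) (hΛne : Λ.Nonempty)
    (hLΛT : L ⊆ (Λ : Set (EuclideanSpace ℝ (Fin d))) + T)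
    (k : ℕ) (hk : 0 < k)
    (hfin : fracCovNumE (L - T) (erode K T) ≠ ⊤) :
    NkCov L K k ≤
      ((⌈6 * (fracCovNumE (L - T) (erode K T)).toReal *
        max (Real.log Λ.card) (k : ℝ)⌉₊ : ℕ) : ℕ∞) := by
  classical
  set N : ℝ := (fracCovNumE (L - T) (erode K T)).toReal with hN
  set m₀ : ℕ := ⌈6 * N * max (Real.log Λ.card) (k : ℝ)⌉₊ with hm₀
  set Λ' : Finset (EuclideanSpace ℝ (Fin d)) := Λ.filter (fun a => a ∈ L - T) with hΛ'
  have hmemΛ' : ∀ p ∈ L, ∃ a ∈ Λ', ∃ t ∈ T, a + t = p := by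
    intro p hp
    obtain ⟨a, haΛ, t, htT, hat⟩ := Set.mem_add.mp (hLΛT hp)
    refine ⟨a, ?_, t, htT, hat⟩
    rw [hΛ', Finset.mem_filter]
    exact ⟨haΛ, Set.mem_sub.mpr ⟨p, hp, t, htT, by rw [← hat]; abel⟩⟩
  obtain ⟨p₀, hp₀⟩ := hLne
  obtain ⟨a₀, ha₀, t₀, ht₀, hat₀⟩ := hmemΛ' p₀ hp₀
  have ha₀LT : a₀ ∈ L - T := (Finset.mem_filter.mp ha₀).2
  have h1F : 1 ≤ fracCovNumE (L - T) (erode K T) := by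
    rw [fracCovNumE]
    refine le_iInf fun s => le_iInf fun w => le_iInf fun hcov => ?_
    have h1 : (1 : ℝ) ≤ ∑ x ∈ s, (w x : ℝ) := by
      refine le_trans (hcov a₀ ha₀LT) (Finset.sum_le_sum fun x _ => ?_)
      split
      · exact le_rfl
      · exact (w x).coe_nonneg
    have h2 : (1 : ℝ≥0) ≤ ∑ x ∈ s, w x := by
      rw [← NNReal.coe_le_coe]; push_cast; exact h1
    rw [← ENNReal.coe_finset_sum]
    exact_mod_cast h2
  have hF0 : fracCovNumE (L - T) (erode K T) ≠ 0 := by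
    intro h
    rw [h] at h1F
    simp at h1F
  have h1N : (1 : ℝ) ≤ N := by
    rw [hN, show (1 : ℝ) = (1 : ℝ≥0∞).toReal by simp]
    exact ENNReal.toReal_mono hfin h1F
  have hlt : fracCovNumE (L - T) (erode K T)
      < fracCovNumE (L - T) (erode K T) + ENNReal.ofReal (1 / 2) := by
    refine ENNReal.lt_add_right hfin ?_
    simp [ENNReal.ofReal_eq_zero]
  obtain ⟨s, w, hcov, hslt⟩ : ∃ (s : Finset (EuclideanSpace ℝ (Fin d)))
      (w : EuclideanSpace ℝ (Fin d) → ℝ≥0),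
      (∀ p ∈ L - T, (1 : ℝ) ≤ ∑ x ∈ s, if p ∈ x +ᵥ erode K T then (w x : ℝ) else 0) ∧
      ∑ x ∈ s, (w x : ℝ≥0∞) < fracCovNumE (L - T) (erode K T) + ENNReal.ofReal (1 / 2) := by
    have h := hlt
    conv_lhs at h => rw [fracCovNumE]
    rw [iInf_lt_iff] at h; obtain ⟨s, h⟩ := h
    rw [iInf_lt_iff] at h; obtain ⟨w, h⟩ := h
    rw [iInf_lt_iff] at h; obtain ⟨hc, h⟩ := h
    exact ⟨s, w, hc, h⟩
  set W : ℝ := ∑ x ∈ s, (w x : ℝ) with hWdef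
  have hWtoReal : (∑ x ∈ s, (w x : ℝ≥0∞)).toReal = W := by
    rw [← ENNReal.coe_finset_sum, ENNReal.coe_toReal, hWdef]
    push_cast
    rfl
  have hWle : W ≤ N + 1 / 2 := by
    rw [← hWtoReal, hN]
    have h1 : (fracCovNumE (L - T) (erode K T) + ENNReal.ofReal (1 / 2)).toReal
        = (fracCovNumE (L - T) (erode K T)).toReal + 1 / 2 := by
      rw [ENNReal.toReal_add hfin ENNReal.ofReal_ne_top, ENNReal.toReal_ofReal (by norm_num)]
    rw [← h1]
    exact ENNReal.toReal_mono (ENNReal.add_ne_top.mpr ⟨hfin, ENNReal.ofReal_ne_top⟩) hslt.le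
  have h1W : (1 : ℝ) ≤ W := by
    refine le_trans (hcov a₀ ha₀LT) (Finset.sum_le_sum fun x _ => ?_)
    split
    · exact le_rfl
    · exact (w x).coe_nonneg
  have hWpos : (0 : ℝ) < W := lt_of_lt_of_le one_pos h1W
  have hex : ∃ x ∈ s, 0 < (w x : ℝ) := by
    by_contra hcon
    push_neg at hcon
    have h0 : ∑ x ∈ s, (if a₀ ∈ x +ᵥ erode K T then (w x : ℝ) else 0) ≤ 0 :=
      Finset.sum_nonpos fun x hx => by split; exacts [hcon x hx, le_rfl]
    linarith [hcov a₀ ha₀LT]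
  obtain ⟨x₀, hx₀s, hx₀pos⟩ := hex
  have hwΛ' : ∀ a ∈ Λ', (1 : ℝ) ≤ ∑ x ∈ s, if a ∈ x +ᵥ erode K T then (w x : ℝ) else 0 :=
    fun a ha => hcov a (Finset.mem_filter.mp ha).2
  have hstep := Stmt13Aux.step (erode K T) Λ' s w hwΛ' x₀ hx₀s hx₀pos W hWdef h1W
  choose pick hpick_mem hpick_le using hstep
  set seq : ℕ → List (EuclideanSpace ℝ (Fin d)) :=
    fun j => Nat.rec [] (fun _ ih => pick ih :: ih) j with hseq
  have hseqS : ∀ j, seq (j + 1) = pick (seq j) :: seq j := fun _ => rfl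
  have hlen : ∀ j, (seq j).length = j := by
    intro j
    induction j with
    | zero => rfl
    | succ j ih => rw [hseqS]; simp [ih]
  set r : ℝ := 1 - 1 / (2 * W) with hr
  have hr0 : 0 ≤ r := by
    rw [hr]
    have h1 : 1 / (2 * W) ≤ 1 := by
      rw [div_le_one (by linarith)]
      linarith
    linarith
  have hpot : ∀ j, Stmt13Aux.pot (erode K T) Λ' (seq j) ≤ (Λ'.card : ℝ) * r ^ j := by
    intro j
    induction j with
    | zero =>
      rw [show seq 0 = [] from rfl, Stmt13Aux.pot_nil]
      simp
    | succ j ih =>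
      rw [hseqS]
      calc Stmt13Aux.pot (erode K T) Λ' (pick (seq j) :: seq j)
          ≤ r * Stmt13Aux.pot (erode K T) Λ' (seq j) := hpick_le (seq j)
        _ ≤ r * ((Λ'.card : ℝ) * r ^ j) := mul_le_mul_of_nonneg_left ih hr0
        _ = (Λ'.card : ℝ) * r ^ (j + 1) := by ring
  have hcard : 0 < Λ'.card := Finset.card_pos.mpr ⟨a₀, ha₀⟩
  have hcardΛ : Λ'.card ≤ Λ.card := Finset.card_filter_le _ _
  have hlog2lt : Real.log 2 < 1 := by
    have := Real.log_two_lt_d9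
    linarith
  have hlog2nn : 0 ≤ Real.log 2 := Real.log_nonneg one_le_two
  have hcard1 : (1 : ℝ) ≤ (Λ'.card : ℝ) := by exact_mod_cast hcard
  have hlogn0 : 0 ≤ Real.log Λ'.card := Real.log_nonneg hcard1
  have hA : Real.log Λ'.card ≤ Real.log Λ.card := by
    apply Real.log_le_log (by exact_mod_cast hcard)
    exact_mod_cast hcardΛ
  have hk1 : (1 : ℝ) ≤ (k : ℝ) := by exact_mod_cast hk
  have hkey : 2 * W * (Real.log Λ'.card + ((k : ℝ) - 1) * Real.log 2) < (m₀ : ℝ) := by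
    have hprod0 : 0 ≤ ((k : ℝ) - 1) * Real.log 2 := mul_nonneg (by linarith) hlog2nn
    have h1 : 2 * W * (Real.log Λ'.card + ((k : ℝ) - 1) * Real.log 2)
        ≤ 3 * N * (Real.log Λ'.card + ((k : ℝ) - 1) * Real.log 2) := by
      apply mul_le_mul_of_nonneg_right (by linarith) (by nlinarith)
    have hNpos : (0 : ℝ) < N := lt_of_lt_of_le one_pos h1N
    have hmk : (k : ℝ) ≤ max (Real.log Λ.card) (k : ℝ) := le_max_right _ _
    have hma : Real.log Λ.card ≤ max (Real.log Λ.card) (k : ℝ) := le_max_left _ _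
    have e1 : ((k : ℝ) - 1) * Real.log 2 < (k : ℝ) := by nlinarith
    have e2 : Real.log Λ'.card + ((k : ℝ) - 1) * Real.log 2
        < 2 * max (Real.log Λ.card) (k : ℝ) := by linarith
    have h2 : 3 * N * (Real.log Λ'.card + ((k : ℝ) - 1) * Real.log 2)
        < 6 * N * max (Real.log Λ.card) (k : ℝ) := by nlinarith
    have h3 : 6 * N * max (Real.log Λ.card) (k : ℝ) ≤ (m₀ : ℝ) := by
      rw [hm₀]
      exact Nat.le_ceil _
    linarith
  have hpotsmall : Stmt13Aux.pot (erode K T) Λ' (seq m₀) < (2⁻¹ : ℝ) ^ (k - 1) := by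
    have e1 : r ≤ Real.exp (-(1 / (2 * W))) := by
      have := Real.add_one_le_exp (-(1 / (2 * W)))
      rw [hr]
      linarith
    have e2 : Stmt13Aux.pot (erode K T) Λ' (seq m₀)
        ≤ (Λ'.card : ℝ) * Real.exp (-(1 / (2 * W))) ^ m₀ :=
      le_trans (hpot m₀)
        (mul_le_mul_of_nonneg_left (pow_le_pow_left₀ hr0 e1 m₀) (by positivity))
    have e3 : Real.exp (-(1 / (2 * W))) ^ m₀ = Real.exp (-((m₀ : ℝ) / (2 * W))) := by
      rw [← Real.exp_nat_mul]
      congr 1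
      ring
    rw [e3] at e2
    have e4 : (Λ'.card : ℝ) * Real.exp (-((m₀ : ℝ) / (2 * W))) < (2⁻¹ : ℝ) ^ (k - 1) := by
      have l1 : (Λ'.card : ℝ) * Real.exp (-((m₀ : ℝ) / (2 * W)))
          = Real.exp (Real.log Λ'.card - (m₀ : ℝ) / (2 * W)) := by
        rw [sub_eq_add_neg, Real.exp_add, Real.exp_log (by exact_mod_cast hcard)]
      have l2 : (2⁻¹ : ℝ) ^ (k - 1) = Real.exp (-(((k - 1 : ℕ) : ℝ) * Real.log 2)) := by
        rw [show -(((k - 1 : ℕ) : ℝ) * Real.log 2) = ((k - 1 : ℕ) : ℝ) * (-Real.log 2) by ring,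
          Real.exp_nat_mul, Real.exp_neg, Real.exp_log two_pos]
      rw [l1, l2]
      apply Real.exp_lt_exp.mpr
      have hcast : ((k - 1 : ℕ) : ℝ) = (k : ℝ) - 1 := by
        rw [Nat.cast_sub hk]
        simp
      rw [hcast]
      have l3 : Real.log Λ'.card + ((k : ℝ) - 1) * Real.log 2 < (m₀ : ℝ) / (2 * W) := by
        rw [lt_div_iff₀ (by linarith : (0 : ℝ) < 2 * W)]
        calc (Real.log Λ'.card + ((k : ℝ) - 1) * Real.log 2) * (2 * W)
            = 2 * W * (Real.log Λ'.card + ((k : ℝ) - 1) * Real.log 2) := by ring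
          _ < (m₀ : ℝ) := hkey
      linarith
    exact lt_of_le_of_lt e2 e4
  have hcnt : ∀ a ∈ Λ', k ≤ Stmt13Aux.cnt (erode K T) (seq m₀) a := by
    intro a ha
    have h1 : (2⁻¹ : ℝ) ^ Stmt13Aux.cnt (erode K T) (seq m₀) a
        ≤ Stmt13Aux.pot (erode K T) Λ' (seq m₀) := by
      unfold Stmt13Aux.pot
      exact Finset.single_le_sum
        (f := fun b => (2⁻¹ : ℝ) ^ Stmt13Aux.cnt (erode K T) (seq m₀) b)
        (fun b _ => by positivity) ha
    have h2 : (2⁻¹ : ℝ) ^ Stmt13Aux.cnt (erode K T) (seq m₀) a < 2⁻¹ ^ (k - 1) :=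
      lt_of_le_of_lt h1 hpotsmall
    have h3 : k - 1 < Stmt13Aux.cnt (erode K T) (seq m₀) a :=
      (pow_lt_pow_iff_right_of_lt_one₀ (by norm_num) (by norm_num)).mp h2
    omega
  have hwit : ∃ x : Fin (seq m₀).length → EuclideanSpace ℝ (Fin d),
      ∀ p ∈ L, k ≤ {i | p ∈ x i +ᵥ K}.ncard := by
    refine ⟨(seq m₀).get, fun p hp => ?_⟩
    obtain ⟨a, haΛ', t, htT, hat⟩ := hmemΛ' p hp
    have hsub : {i : Fin (seq m₀).length | a ∈ (seq m₀).get i +ᵥ erode K T}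
        ⊆ {i | p ∈ (seq m₀).get i +ᵥ K} := by
      intro i hi
      simp only [Set.mem_setOf_eq] at hi ⊢
      rw [Set.mem_vadd_set_iff_neg_vadd_mem] at hi ⊢
      have h5 : (-(seq m₀).get i +ᵥ a) +ᵥ T ⊆ K := hi
      have h6 : (-(seq m₀).get i +ᵥ a) +ᵥ t ∈ (-(seq m₀).get i +ᵥ a) +ᵥ T :=
        Set.vadd_mem_vadd_set htT
      have h7 := h5 h6
      have h8 : (-(seq m₀).get i +ᵥ a) +ᵥ t = -(seq m₀).get i +ᵥ p := by
        simp only [vadd_eq_add]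
        rw [← hat]
        abel
      rwa [h8] at h7
    have h9 : k ≤ {i : Fin (seq m₀).length | a ∈ (seq m₀).get i +ᵥ erode K T}.ncard := by
      rw [Stmt13Aux.cnt_eq_ncard]
      exact hcnt a haΛ'
    exact le_trans h9 (Set.ncard_le_ncard hsub (Set.toFinite _))
  have hfinal : NkCov L K k ≤ (((seq m₀).length : ℕ) : ℕ∞) := by
    rw [NkCov]
    exact iInf₂_le ((seq m₀).length) hwit
  rw [hlen m₀] at hfinal
  exact hfinal
end

section
/- Let K, L, T be bounded Borel measurable sets in ℝ^d with L nonempty, let Λ ⊂ ℝ^d be a nonempty finite set with Λ ⊆ L and L ⊆ Λ + T, and let k be a positive integer. Assume N*(L, K ∼ T) < ∞. Then N_k(L, K) ≤ ⌈6·N*(L, K ∼ T)·max{ln|Λ|, k}⌉. -/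
open MeasureTheory Pointwise Set
open scoped ENNReal NNReal Classical

lemma chernoff_count {α β : Type*} (s : Finset α) (w : α → ℝ) (hw : ∀ x, 0 ≤ w x)
    (Λ' : Finset β) (hΛ : Λ'.Nonempty) (C : β → α → Prop) (k m : ℕ)
    (hA : ∀ b ∈ Λ', 1 ≤ ∑ x ∈ s, if C b x then w x else 0)
    (hm : 2 * (∑ x ∈ s, w x) * (Real.log Λ'.card + k * Real.log 2) < m) :
    ∃ f : Fin m → α, ∀ b ∈ Λ', k ≤ (Finset.univ.filter fun i => C b (f i)).card := by
  by_contra hcon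
  push_neg at hcon
  set W : ℝ := ∑ x ∈ s, w x with hWdef
  have hW1 : 1 ≤ W := by
    obtain ⟨b₀, hb₀⟩ := hΛ
    refine (hA b₀ hb₀).trans (Finset.sum_le_sum fun x _ => ?_)
    split <;> simp [hw x]
  have hW0 : (0:ℝ) < W := lt_of_lt_of_le one_pos hW1
  set Ω := Fintype.piFinset (fun _ : Fin m => s) with hΩ
  set P : (Fin m → α) → ℝ := fun f => ∏ i, w (f i) with hP
  have hPnn : ∀ f, 0 ≤ P f := fun f => Finset.prod_nonneg fun i _ => hw _
  have htot : ∑ f ∈ Ω, P f = W ^ m := by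
    rw [hP, ← Finset.prod_univ_sum]
    simp [hWdef]
  set bad : β → (Fin m → α) → Prop := fun b f => (Finset.univ.filter fun i => C b (f i)).card < k
    with hbad
  -- step 1 : union bound
  have h1 : W ^ m ≤ ∑ b ∈ Λ', ∑ f ∈ Ω, if bad b f then P f else 0 := by
    rw [← htot, Finset.sum_comm]
    refine Finset.sum_le_sum fun f _ => ?_
    obtain ⟨b, hb, hbadf⟩ := hcon f
    calc P f = if bad b f then P f else 0 := by simp [hbad, hbadf]
    _ ≤ ∑ b ∈ Λ', if bad b f then P f else 0 :=
        Finset.single_le_sum (f := fun b => if bad b f then P f else 0)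
          (fun b _ => by by_cases h : bad b f <;> simp [h, hPnn f]) hb
  -- step 2 : per-point Chernoff bound
  have h2 : ∀ b ∈ Λ', ∑ f ∈ Ω, (if bad b f then P f else 0)
      ≤ (2:ℝ) ^ k * (W - 1/2) ^ m := by
    intro b hb
    have key : ∑ f ∈ Ω, (if bad b f then P f else 0)
        ≤ (2:ℝ)^k * ∑ f ∈ Ω, ∏ i, (w (f i) * (if C b (f i) then 1/2 else 1)) := by
      rw [Finset.mul_sum]
      refine Finset.sum_le_sum fun f _ => ?_
      have hprodsplit : ∏ i, (w (f i) * (if C b (f i) then (1/2:ℝ) else 1))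
          = P f * (1/2) ^ (Finset.univ.filter fun i => C b (f i)).card := by
        rw [Finset.prod_mul_distrib]
        congr 1
        rw [← Finset.prod_filter_mul_prod_filter_not Finset.univ (fun i => C b (f i))]
        rw [Finset.prod_congr rfl (fun i hi => if_pos (Finset.mem_filter.mp hi).2),
          Finset.prod_congr rfl (fun i hi => if_neg (Finset.mem_filter.mp hi).2),
          Finset.prod_const, Finset.prod_const, one_pow, mul_one]
      rw [hprodsplit]
      split
      · rename_i hbf
        have hck : (Finset.univ.filter fun i => C b (f i)).card ≤ k := le_of_lt hbf
        have : (1:ℝ) ≤ (2:ℝ)^k * (1/2) ^ (Finset.univ.filter fun i => C b (f i)).card := by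
          calc (1:ℝ) = ((2:ℝ) * (1/2))^k := by norm_num
          _ = (2:ℝ)^k * ((1/2):ℝ)^k := mul_pow _ _ _
          _ ≤ (2:ℝ)^k * (1/2) ^ (Finset.univ.filter fun i => C b (f i)).card :=
              mul_le_mul_of_nonneg_left
                (pow_le_pow_of_le_one (by norm_num) (by norm_num) hck) (by positivity)
        calc P f = P f * 1 := (mul_one _).symm
        _ ≤ P f * ((2:ℝ)^k * (1/2) ^ (Finset.univ.filter fun i => C b (f i)).card) :=
            mul_le_mul_of_nonneg_left this (hPnn f)
        _ = (2:ℝ)^k * (P f * (1/2) ^ (Finset.univ.filter fun i => C b (f i)).card) := by ring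
      · have := hPnn f; positivity
    refine key.trans ?_
    have hsum : ∑ f ∈ Ω, ∏ i, (w (f i) * (if C b (f i) then (1/2:ℝ) else 1))
        = (W - (1/2) * ∑ x ∈ s, if C b x then w x else 0) ^ m := by
      have hps := Finset.prod_univ_sum (fun _ : Fin m => s)
        (fun _ x => w x * if C b x then (1/2:ℝ) else 1)
      rw [hΩ, ← hps]
      have : ∑ x ∈ s, (w x * if C b x then (1/2:ℝ) else 1)
          = W - (1/2) * ∑ x ∈ s, if C b x then w x else 0 := by
        rw [hWdef, Finset.mul_sum, ← Finset.sum_sub_distrib]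
        refine Finset.sum_congr rfl fun x _ => ?_
        split <;> ring
      rw [this, Finset.prod_const, Finset.card_univ, Fintype.card_fin]
    rw [hsum]
    have hAb := hA b hb
    have hAW : (∑ x ∈ s, if C b x then w x else 0) ≤ W := by
      refine Finset.sum_le_sum fun x _ => ?_
      split <;> simp [hw x]
    refine mul_le_mul_of_nonneg_left (pow_le_pow_left₀ ?_ (by linarith) m) (by positivity)
    linarith
  have h3 : W ^ m ≤ (Λ'.card : ℝ) * ((2:ℝ)^k * (W - 1/2)^m) := by
    calc W ^ m ≤ ∑ b ∈ Λ', ∑ f ∈ Ω, if bad b f then P f else 0 := h1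
    _ ≤ ∑ _b ∈ Λ', (2:ℝ)^k * (W - 1/2)^m := Finset.sum_le_sum h2
    _ = (Λ'.card : ℝ) * ((2:ℝ)^k * (W - 1/2)^m) := by rw [Finset.sum_const, nsmul_eq_mul]
  -- final contradiction
  have hn1 : (1:ℝ) ≤ Λ'.card := by exact_mod_cast Nat.one_le_iff_ne_zero.mpr (Finset.card_ne_zero_of_mem hΛ.choose_spec)
  have hexp : (W - 1/2)^m ≤ W^m * Real.exp (-(m / (2*W))) := by
    have h12 : (1:ℝ) - 1/(2*W) ≤ Real.exp (-(1/(2*W))) := by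
      have := Real.add_one_le_exp (-(1/(2*W)))
      linarith
    have hWe : W - 1/2 = W * (1 - 1/(2*W)) := by field_simp
    calc (W - 1/2)^m = (W * (1 - 1/(2*W)))^m := by rw [hWe]
    _ ≤ (W * Real.exp (-(1/(2*W))))^m := by
        refine pow_le_pow_left₀ ?_ (mul_le_mul_of_nonneg_left h12 hW0.le) m
        have : 1/(2*W) ≤ 1/2 := by
          rw [div_le_div_iff₀ (by linarith) (by norm_num)]; linarith
        nlinarith
    _ = W^m * Real.exp (-(1/(2*W)))^m := mul_pow _ _ m
    _ = W^m * Real.exp (-(m/(2*W))) := by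
        rw [← Real.exp_nat_mul]
        congr 1
        field_simp
  have hlt : (Λ'.card : ℝ) * ((2:ℝ)^k * (W - 1/2)^m) < W^m := by
    have hx : (Λ'.card : ℝ) * ((2:ℝ)^k * (W - 1/2)^m)
        ≤ (Λ'.card : ℝ) * ((2:ℝ)^k * (W^m * Real.exp (-(m / (2*W))))) := by
      refine mul_le_mul_of_nonneg_left (mul_le_mul_of_nonneg_left hexp (by positivity)) (by positivity)
    refine hx.trans_lt ?_
    have hrw : (Λ'.card : ℝ) * ((2:ℝ)^k * (W^m * Real.exp (-(m / (2*W)))))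
        = W^m * (Real.exp (Real.log Λ'.card + k * Real.log 2 - m/(2*W))) := by
      rw [Real.exp_sub, Real.exp_add, Real.exp_log (by linarith), Real.exp_nat_mul,
        Real.exp_log (by norm_num : (0:ℝ) < 2)]
      rw [Real.exp_neg]
      field_simp
    rw [hrw]
    have harg : Real.log Λ'.card + k * Real.log 2 - m/(2*W) < 0 := by
      have : Real.log Λ'.card + k * Real.log 2 < m / (2*W) := by
        rw [lt_div_iff₀ (by linarith)]
        calc (Real.log Λ'.card + k * Real.log 2) * (2*W)
            = 2 * W * (Real.log Λ'.card + k * Real.log 2) := by ring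
        _ < m := hm
      linarith
    have : Real.exp (Real.log Λ'.card + k * Real.log 2 - m/(2*W)) < 1 :=
      Real.exp_lt_one_iff.mpr harg
    nlinarith [pow_pos hW0 m]
  exact absurd h3 (not_le.mpr hlt)


theorem stmt14 (d : ℕ) (K L T : Set (EuclideanSpace ℝ (Fin d)))
    (hKb : Bornology.IsBounded K) (hLb : Bornology.IsBounded L)
    (hTb : Bornology.IsBounded T)
    (hKm : MeasurableSet K) (hLm : MeasurableSet L) (hTm : MeasurableSet T)
    (hLne : L.Nonempty)
    (Λ : Finset (EuclideanSpace ℝ (Fin d))) (hΛne : Λ.Nonempty)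
    (hΛL : (Λ : Set (EuclideanSpace ℝ (Fin d))) ⊆ L)
    (hLΛT : L ⊆ (Λ : Set (EuclideanSpace ℝ (Fin d))) + T)
    (k : ℕ) (hk : 0 < k)
    (hfin : fracCovNumE L (erode K T) ≠ ⊤) :
    NkCov L K k ≤
      ((⌈6 * (fracCovNumE L (erode K T)).toReal *
        max (Real.log Λ.card) (k : ℝ)⌉₊ : ℕ) : ℕ∞) := by
  set N := fracCovNumE L (erode K T) with hNdef
  have hN1 : (1:ℝ≥0∞) ≤ N := by
    rw [hNdef, fracCovNumE]
    refine le_iInf fun s => le_iInf fun w => le_iInf fun hcond => ?_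
    obtain ⟨p, hp⟩ := hLne
    have h1 : (1:ℝ) ≤ ∑ x ∈ s, ((w x : ℝ)) := by
      refine (hcond p hp).trans (Finset.sum_le_sum fun x _ => ?_)
      split <;> simp [(w x).coe_nonneg]
    rw [← ENNReal.coe_finset_sum, ENNReal.one_le_coe_iff]
    exact_mod_cast h1
  have hN0 : N ≠ 0 := (lt_of_lt_of_le one_pos hN1).ne'
  have hlt2 : fracCovNumE L (erode K T) < N * (3/2) := by
    rw [← hNdef]
    nth_rewrite 1 [← mul_one N]
    rw [ENNReal.mul_lt_mul_iff_right hN0 hfin,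
      ENNReal.lt_div_iff_mul_lt (by norm_num) (by norm_num)]
    norm_num
  rw [fracCovNumE] at hlt2
  obtain ⟨s, hs⟩ := iInf_lt_iff.mp hlt2
  obtain ⟨w, hw2⟩ := iInf_lt_iff.mp hs
  obtain ⟨hcond, hlt3⟩ := iInf_lt_iff.mp hw2
  set Nr := N.toReal with hNr
  have hNr1 : (1:ℝ) ≤ Nr := by
    rw [hNr, ← ENNReal.toReal_one]
    exact ENNReal.toReal_mono hfin hN1
  set W : ℝ := ∑ x ∈ s, ((w x : ℝ)) with hW
  have hWle : W ≤ Nr * (3/2) := by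
    have h := ENNReal.toReal_mono (b := N * (3/2))
      (ENNReal.mul_ne_top hfin ((ENNReal.div_lt_top (by norm_num) (by norm_num)).ne)) hlt3.le
    rw [ENNReal.toReal_mul] at h
    have h32 : ((3/2 : ℝ≥0∞)).toReal = 3/2 := by simp [ENNReal.toReal_div]
    rw [h32] at h
    calc W = (∑ x ∈ s, ((w x : ℝ≥0) : ℝ≥0∞)).toReal := by
          rw [← ENNReal.coe_finset_sum, ENNReal.coe_toReal, NNReal.coe_sum, hW]
    _ ≤ Nr * (3/2) := h
  set n := Λ.card with hn
  set m := ⌈6 * Nr * max (Real.log n) (k:ℝ)⌉₊ with hm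
  have hn1 : 1 ≤ n := hΛne.card_pos
  have hmnum : 2 * W * (Real.log n + k * Real.log 2) < (m:ℝ) := by
    have hlogn : 0 ≤ Real.log n := Real.log_nonneg (by exact_mod_cast hn1)
    have hl2 : Real.log 2 < 0.6931471808 := Real.log_two_lt_d9
    have hl2' : 0 < Real.log 2 := Real.log_pos (by norm_num)
    have hk1 : (1:ℝ) ≤ k := by exact_mod_cast hk
    have hM1 : Real.log n ≤ max (Real.log n) (k:ℝ) := le_max_left _ _
    have hM2 : (k:ℝ) ≤ max (Real.log n) (k:ℝ) := le_max_right _ _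
    have hpos : (0:ℝ) ≤ Real.log n + k * Real.log 2 :=
      add_nonneg hlogn (mul_nonneg (Nat.cast_nonneg k) hl2'.le)
    have step1 : 2 * W * (Real.log n + k * Real.log 2)
        ≤ 2 * (Nr * (3/2)) * (Real.log n + k * Real.log 2) := by
      nlinarith [mul_le_mul_of_nonneg_right hWle hpos]
    have step2 : 2 * (Nr * (3/2)) * (Real.log n + k * Real.log 2)
        < 6 * Nr * max (Real.log n) (k:ℝ) := by
      nlinarith [mul_le_mul_of_nonneg_left hl2.le (by positivity : (0:ℝ) ≤ 3 * Nr * k),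
        mul_le_mul_of_nonneg_left hM2 (by positivity : (0:ℝ) ≤ 3 * Nr),
        mul_le_mul_of_nonneg_left hM1 (by positivity : (0:ℝ) ≤ 3 * Nr),
        mul_le_mul_of_nonneg_left hk1 (by positivity : (0:ℝ) ≤ Nr)]
    have step3 : 6 * Nr * max (Real.log n) (k:ℝ) ≤ (m:ℝ) := Nat.le_ceil _
    linarith
  obtain ⟨f, hf⟩ := chernoff_count s (fun x => ((w x : ℝ))) (fun x => (w x).coe_nonneg)
    Λ hΛne (fun b x => b ∈ x +ᵥ erode K T) k m (fun b hb => hcond b (hΛL hb)) hmnum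
  refine le_trans (iInf₂_le (f := fun (m' : ℕ) _ => (m' : ℕ∞)) m ⟨f, ?_⟩) le_rfl
  intro p hp
  obtain ⟨b, hb, t, ht, hbt⟩ := hLΛT hp
  refine le_trans (hf b hb) ?_
  have hcard : {i | p ∈ f i +ᵥ K}.ncard = (Finset.univ.filter fun i => p ∈ f i +ᵥ K).card := by
    rw [Set.ncard_eq_toFinset_card', Set.toFinset_setOf]
  rw [hcard]
  apply Finset.card_le_card
  intro i hi
  rw [Finset.mem_filter] at hi ⊢
  refine ⟨hi.1, ?_⟩
  have hbm : b ∈ f i +ᵥ erode K T := hi.2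
  rw [Set.mem_vadd_set_iff_neg_vadd_mem] at hbm ⊢
  have hmem := hbm (Set.vadd_mem_vadd_set (a := -(f i) +ᵥ b) ht)
  have heq : -(f i) +ᵥ p = (-(f i) +ᵥ b) +ᵥ t := by
    simp only [vadd_eq_add, ← hbt]
    abel
  rw [heq]
  exact hmem
end

section
/- Let K and L be convex bodies in ℝ^d with the origin in the interior of K, and let (λ_i)_{i≥1} be real numbers with 0 < λ_i ≤ λ_1 < 1 for all i. Assume Σ_{i=1}^∞ λ_i^d ≥ 2^d·vol(L + (λ_1/2)·(K ∩ (−K)))/vol(K ∩ (−K)). Then the family {λ_1 K, λ_2 K, …} permits a translative covering of L: there exist translation vectors x_i ∈ ℝ^d such that L ⊆ ∪_i (x_i + λ_i K). -/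
open MeasureTheory Pointwise Set
open scoped ENNReal

section Stmt16Proof
open Filter


lemma exists_pick (lam : ℕ → ℝ) (hpos : ∀ i, 0 < lam i)
    (hfin : ∀ ε, 0 < ε → {i | ε ≤ lam i}.Finite) (s : Finset ℕ) :
    ∃ i, i ∉ s ∧ ∀ j, j ∉ s → lam j ≤ lam i := by
  obtain ⟨j0, hj0⟩ := Infinite.exists_notMem_finset s
  have hF : {i | lam j0 ≤ lam i}.Finite := hfin _ (hpos j0)
  set C : Finset ℕ := hF.toFinset \ s with hC
  have hj0C : j0 ∈ C := by
    simp [hC, Set.Finite.mem_toFinset, hj0]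
  obtain ⟨i, hiC, hmax⟩ := C.exists_max_image lam ⟨j0, hj0C⟩
  refine ⟨i, ?_, ?_⟩
  · intro hi
    simp [hC, hi] at hiC
  · intro j hj
    rcases le_or_gt (lam j0) (lam j) with h | h
    · exact hmax j (by simp [hC, Set.Finite.mem_toFinset, hj, h])
    · exact le_trans h.le (hmax j0 hj0C)

lemma exists_sorted (lam : ℕ → ℝ) (hpos : ∀ i, 0 < lam i)
    (hfin : ∀ ε, 0 < ε → {i | ε ≤ lam i}.Finite) :
    ∃ σ : Equiv.Perm ℕ, Antitone (lam ∘ σ) := by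
  choose pick hpick1 hpick2 using exists_pick lam hpos hfin
  let S : ℕ → Finset ℕ := fun n => Nat.rec ∅ (fun _ s => insert (pick s) s) n
  have hSsucc : ∀ n, S (n + 1) = insert (pick (S n)) (S n) := fun n => rfl
  set σ : ℕ → ℕ := fun n => pick (S n) with hσ
  have hmem : ∀ n i, i ∈ S n ↔ ∃ m, m < n ∧ σ m = i := by
    intro n
    induction n with
    | zero => simp [S]
    | succ n ih =>
      intro i
      rw [hSsucc, Finset.mem_insert]
      constructor
      · rintro (rfl | h)
        · exact ⟨n, Nat.lt_succ_self n, rfl⟩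
        · obtain ⟨m, hm, rfl⟩ := (ih i).mp h
          exact ⟨m, hm.trans (Nat.lt_succ_self n), rfl⟩
      · rintro ⟨m, hm, rfl⟩
        rcases Nat.lt_succ_iff_lt_or_eq.mp hm with h | rfl
        · exact Or.inr ((ih _).mpr ⟨m, h, rfl⟩)
        · exact Or.inl rfl
  have hinj : Function.Injective σ := by
    intro m n h
    by_contra hne
    wlog hmn : m < n generalizing m n
    · exact this h.symm (Ne.symm hne) ((Ne.lt_or_gt hne).resolve_left hmn)
    have : σ m ∈ S n := (hmem n (σ m)).mpr ⟨m, hmn, rfl⟩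
    rw [h] at this
    exact hpick1 (S n) this
  have hanti : Antitone (lam ∘ σ) := by
    apply antitone_nat_of_succ_le
    intro n
    have h1 : σ (n+1) ∉ S (n+1) := hpick1 _
    rw [hSsucc, Finset.mem_insert] at h1
    push_neg at h1
    exact hpick2 (S n) _ h1.2
  have hsurj : Function.Surjective σ := by
    intro i
    by_contra hni
    push_neg at hni
    have hiS : ∀ n, i ∉ S n := by
      intro n hn
      obtain ⟨m, _, hm⟩ := (hmem n i).mp hn
      exact hni m hm
    have hge : ∀ n, σ n ∈ {j | lam i ≤ lam j} := fun n => hpick2 (S n) i (hiS n)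
    exact Set.infinite_of_injective_forall_mem hinj hge (hfin _ (hpos i))
  exact ⟨Equiv.ofBijective σ ⟨hinj, hsurj⟩, hanti⟩


lemma caseA {d : ℕ} (K L : Set (EuclideanSpace ℝ (Fin d)))
    (lam : ℕ → ℝ) (hpos : ∀ i, 0 < lam i)
    (hLne : L.Nonempty)
    (r : ℝ) (hr : 0 < r) (hball : Metric.ball (0 : EuclideanSpace ℝ (Fin d)) r ⊆ K)
    (ε : ℝ) (hε : 0 < ε) (hS : {i | ε ≤ lam i}.Infinite) :
    ∃ x : ℕ → EuclideanSpace ℝ (Fin d), L ⊆ ⋃ i, x i +ᵥ lam i • K := by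
  obtain ⟨c, hcct, hcsub⟩ := (TopologicalSpace.IsSeparable.of_separableSpace L : TopologicalSpace.IsSeparable L)
  have hcne : (insert hLne.choose c).Nonempty := ⟨hLne.choose, Set.mem_insert _ _⟩
  obtain ⟨f, hf⟩ := Set.Countable.exists_eq_range (hcct.insert _) hcne
  set e := hS.natEmbedding with he
  classical
  set x : ℕ → EuclideanSpace ℝ (Fin d) := fun i =>
    if h : ∃ n, ((e n : {i | ε ≤ lam i}) : ℕ) = i then f h.choose else f 0 with hx
  refine ⟨x, ?_⟩
  intro y hy
  have hyc : y ∈ closure c := hcsub hy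
  obtain ⟨p, hpc, hdist⟩ := Metric.mem_closure_iff.mp hyc (ε * r) (by positivity)
  have hpr : p ∈ Set.range f := by rw [← hf]; exact Set.mem_insert_of_mem _ hpc
  obtain ⟨n, rfl⟩ := hpr
  set i : ℕ := ((e n : {i | ε ≤ lam i}) : ℕ) with hi
  have hex : ∃ m, ((e m : {i | ε ≤ lam i}) : ℕ) = i := ⟨n, rfl⟩
  have hchoose : hex.choose = n := by
    have := hex.choose_spec
    have h2 : e hex.choose = e n := Subtype.coe_injective (by simp only [this, hi])
    exact e.injective h2
  have hxi : x i = f n := by rw [hx]; simp only [dif_pos hex, hchoose]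
  have hlami : ε ≤ lam i := (e n).2
  have hlampos : 0 < lam i := hpos i
  refine Set.mem_iUnion.mpr ⟨i, ?_⟩
  rw [Set.mem_vadd_set_iff_neg_vadd_mem, hxi]
  -- -f n +ᵥ y ∈ lam i • K
  have hmem : (lam i)⁻¹ • (y - f n) ∈ Metric.ball (0 : EuclideanSpace ℝ (Fin d)) r := by
    rw [Metric.mem_ball, dist_zero_right, norm_smul, norm_inv, Real.norm_eq_abs,
      abs_of_pos hlampos]
    rw [inv_mul_lt_iff₀ hlampos]
    have : ‖y - f n‖ < ε * r := by
      rw [← dist_eq_norm]; exact hdist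
    calc ‖y - f n‖ < ε * r := this
      _ ≤ lam i * r := by nlinarith
  have : y - f n ∈ lam i • K := by
    refine ⟨(lam i)⁻¹ • (y - f n), hball hmem, ?_⟩
    show lam i • ((lam i)⁻¹ • (y - f n)) = y - f n
    rw [smul_smul, mul_inv_cancel₀ hlampos.ne', one_smul]
  simpa [vadd_eq_add, sub_eq_neg_add] using this


namespace Stmt16Aux
open scoped Classical

variable {E : Type*} [NormedAddCommGroup E] [NormedSpace ℝ E]

noncomputable def gpre (L K : Set E) (ν : ℕ → ℝ) : ℕ → ℕ → E
  | 0 => fun _ => 0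
  | (n+1) => Function.update (gpre L K ν n) n
      (if h : (L \ ⋃ j ∈ Finset.range n, (gpre L K ν n j +ᵥ ν j • K)).Nonempty
        then h.choose else 0)

noncomputable def greedy (L K : Set E) (ν : ℕ → ℝ) (n : ℕ) : E := gpre L K ν (n+1) n

lemma gpre_stable (L K : Set E) (ν : ℕ → ℝ) :
    ∀ m n, n < m → gpre L K ν m n = greedy L K ν n := by
  intro m
  induction m with
  | zero => intro n hn; omega
  | succ m ih =>
    intro n hn
    rcases Nat.lt_succ_iff_lt_or_eq.mp hn with h | rfl
    · rw [show gpre L K ν (m+1) n = gpre L K ν m n by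
        simp [gpre, Function.update_of_ne (by omega : n ≠ m)]]
      exact ih n h
    · rfl

def Unc (L K : Set E) (ν : ℕ → ℝ) (n : ℕ) : Set E :=
  L \ ⋃ j ∈ Finset.range n, (greedy L K ν j +ᵥ ν j • K)

lemma greedy_eq (L K : Set E) (ν : ℕ → ℝ) (n : ℕ) :
    greedy L K ν n = if h : (Unc L K ν n).Nonempty then h.choose else 0 := by
  have hU : (L \ ⋃ j ∈ Finset.range n, (gpre L K ν n j +ᵥ ν j • K)) = Unc L K ν n := by
    unfold Unc
    congr 1
    apply Set.iUnion_congr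
    intro j
    apply Set.iUnion_congr
    intro hj
    rw [gpre_stable L K ν n j (Finset.mem_range.mp hj)]
  show gpre L K ν (n+1) n = _
  rw [show gpre L K ν (n+1) n
      = (if h : (L \ ⋃ j ∈ Finset.range n, (gpre L K ν n j +ᵥ ν j • K)).Nonempty
          then h.choose else 0) by simp [gpre]]
  congr 1 <;> rw [hU]

lemma greedy_mem (L K : Set E) (ν : ℕ → ℝ) (n : ℕ) (h : (Unc L K ν n).Nonempty) :
    greedy L K ν n ∈ Unc L K ν n := by
  rw [greedy_eq L K ν n, dif_pos h]
  exact h.choose_spec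

end Stmt16Aux

section Gain
variable {d : ℕ}


lemma proj_ne_top (hd : 0 < d) :
    LinearMap.ker ((EuclideanSpace.proj (⟨0, hd⟩ : Fin d) :
      EuclideanSpace ℝ (Fin d) →L[ℝ] ℝ) : EuclideanSpace ℝ (Fin d) →ₗ[ℝ] ℝ) ≠ ⊤ := by
  intro h
  have h1 : (EuclideanSpace.single (⟨0, hd⟩ : Fin d) (1:ℝ)) ∈ LinearMap.ker
      ((EuclideanSpace.proj (⟨0, hd⟩ : Fin d) :
        EuclideanSpace ℝ (Fin d) →L[ℝ] ℝ) : EuclideanSpace ℝ (Fin d) →ₗ[ℝ] ℝ) := by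
    rw [h]; trivial
  rw [LinearMap.mem_ker] at h1
  simp at h1

lemma half_volume (hd : 0 < d) (M : Set (EuclideanSpace ℝ (Fin d)))
    (hMcomp : IsCompact M) (hMsymm : -M = M) :
    volume (M ∩ {z | 0 < (EuclideanSpace.proj (⟨0, hd⟩ : Fin d)) z})
      + volume (M ∩ {z | 0 < (EuclideanSpace.proj (⟨0, hd⟩ : Fin d)) z}) = volume M := by
  set φ := (EuclideanSpace.proj (⟨0, hd⟩ : Fin d) : EuclideanSpace ℝ (Fin d) →L[ℝ] ℝ) with hφ
  set A := M ∩ {z | 0 < φ z} with hA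
  set B := M ∩ {z | φ z < 0} with hB
  have hN : volume {z : EuclideanSpace ℝ (Fin d) | φ z = 0} = 0 := by
    have heq : {z : EuclideanSpace ℝ (Fin d) | φ z = 0}
        = ((LinearMap.ker (φ : EuclideanSpace ℝ (Fin d) →ₗ[ℝ] ℝ)) :
            Set (EuclideanSpace ℝ (Fin d))) := by
      ext z
      simp only [Set.mem_setOf_eq, SetLike.mem_coe, LinearMap.mem_ker,
        ContinuousLinearMap.coe_coe]
    rw [heq]
    exact Measure.addHaar_submodule _ _ (proj_ne_top hd)
  have hBA : B = -A := by
    rw [hA, hB, Set.inter_neg, hMsymm]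
    congr 1
    ext z
    simp only [Set.mem_neg, Set.mem_setOf_eq, map_neg]
    constructor <;> intro h <;> linarith
  have hvolBA : volume B = volume A := by
    rw [hBA]
    have : -A = (-1 : ℝ) • A := by
      rw [Set.neg_smul_set, one_smul]
    rw [this, Measure.addHaar_smul]
    simp
  have hAmeas : MeasurableSet A :=
    hMcomp.measurableSet.inter (isOpen_lt continuous_const φ.continuous).measurableSet
  have hsplit : volume (A ∪ B) = volume A + volume B := by
    apply measure_union _ (hMcomp.measurableSet.inter
      (isOpen_lt φ.continuous continuous_const).measurableSet)
    rw [Set.disjoint_left]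
    rintro z ⟨_, hz1⟩ ⟨_, hz2⟩
    simp only [Set.mem_setOf_eq] at hz1 hz2
    linarith
  have hMdiff : volume M = volume (M \ {z | φ z = 0}) := (measure_diff_null hN).symm
  have hU : M \ {z | φ z = 0} = A ∪ B := by
    ext z
    simp only [Set.mem_diff, Set.mem_setOf_eq, hA, hB, Set.mem_union, Set.mem_inter_iff]
    constructor
    · rintro ⟨hz, hne⟩
      rcases lt_or_gt_of_ne hne with h | h
      · exact Or.inr ⟨hz, h⟩
      · exact Or.inl ⟨hz, h⟩
    · rintro (⟨hz, h⟩ | ⟨hz, h⟩) <;> exact ⟨hz, by intro h2; rw [h2] at h; exact lt_irrefl 0 h⟩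
  rw [hMdiff, hU, hsplit, hvolBA]

lemma gain_lemma (hd : 0 < d) (M : Set (EuclideanSpace ℝ (Fin d)))
    (hMcomp : IsCompact M) (hMconv : Convex ℝ M) (hMsymm : -M = M)
    (hM0 : (0:EuclideanSpace ℝ (Fin d)) ∈ M)
    (X : Set (EuclideanSpace ℝ (Fin d))) (hXcomp : IsCompact X) (hXne : X.Nonempty)
    (δ : ℝ) (hδ : 0 ≤ δ) :
    volume X + ENNReal.ofReal (δ ^ d) * volume M / 2 ≤ volume (X + δ • M) := by
  rcases eq_or_lt_of_le hδ with rfl | hδpos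
  · have h0 : (0:ℝ) • M = {(0:EuclideanSpace ℝ (Fin d))} := by
      rw [Set.zero_smul_set ⟨0, hM0⟩]; rfl
    rw [h0]
    simp [zero_pow hd.ne', Set.add_singleton]
  set φ := (EuclideanSpace.proj (⟨0, hd⟩ : Fin d) : EuclideanSpace ℝ (Fin d) →L[ℝ] ℝ) with hφ
  obtain ⟨x, hxX, hxmax'⟩ := hXcomp.exists_isMaxOn hXne φ.continuous.continuousOn
  have hxmax : ∀ y ∈ X, φ y ≤ φ x := fun y hy => hxmax' hy
  set A := M ∩ {z | 0 < φ z} with hA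
  set H := x +ᵥ (δ • A) with hH
  have hHsub : H ⊆ X + δ • M := by
    rintro _ ⟨z, ⟨m, hm, rfl⟩, rfl⟩
    exact ⟨x, hxX, δ • m, Set.smul_mem_smul_set hm.1, rfl⟩
  have hXsub : X ⊆ X + δ • M := by
    intro z hz
    exact ⟨z, hz, 0, ⟨0, hM0, smul_zero δ⟩, add_zero z⟩
  have hdisj : Disjoint X H := by
    rw [Set.disjoint_left]
    rintro z hzX ⟨_, ⟨m, hm, rfl⟩, rfl⟩
    have h1 : φ (x + δ • m) = φ x + δ * φ m := by
      rw [map_add, ContinuousLinearMap.map_smul]; rfl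
    have h2 : 0 < φ m := hm.2
    have h3 : φ (x + δ • m) ≤ φ x := hxmax _ hzX
    nlinarith
  have hHmeas : MeasurableSet H := by
    apply MeasurableSet.const_vadd
    apply MeasurableSet.const_smul₀
    exact hMcomp.measurableSet.inter (isOpen_lt continuous_const φ.continuous).measurableSet
  have hvolH : volume H = ENNReal.ofReal (δ ^ d) * volume A := by
    rw [hH, measure_vadd, Measure.addHaar_smul, finrank_euclideanSpace_fin,
      abs_of_nonneg (pow_nonneg hδ _)]
  have hvolA : volume A = volume M / 2 := by
    have h2 := half_volume hd M hMcomp hMsymm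
    rw [← hφ] at h2
    rw [← h2, ← hA]
    rw [← two_mul, mul_comm, mul_div_assoc, ENNReal.div_self (by norm_num) (by norm_num), mul_one]
  calc volume X + ENNReal.ofReal (δ ^ d) * volume M / 2
      = volume X + volume H := by rw [hvolH, hvolA, mul_div_assoc]
    _ = volume (X ∪ H) := (measure_union hdisj hHmeas).symm
    _ ≤ volume (X + δ • M) := measure_mono (Set.union_subset hXsub hHsub)

end Gain

lemma caseB {d : ℕ} (hd : 0 < d) (K L : Set (EuclideanSpace ℝ (Fin d)))
    (hKcomp : IsCompact K) (hKconv : Convex ℝ K)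
    (hLcomp : IsCompact L)
    (ho : (0 : EuclideanSpace ℝ (Fin d)) ∈ interior K)
    (ν : ℕ → ℝ) (hνpos : ∀ n, 0 < ν n) (hνanti : Antitone ν)
    (hν0 : Filter.Tendsto ν Filter.atTop (nhds 0))
    (hsum' : volume (L + (ν 0 / 2) • (K ∩ -K)) ≤
        (∑' n, ENNReal.ofReal ((ν n / 2) ^ d)) * volume (K ∩ -K)) :
    ∃ y : ℕ → EuclideanSpace ℝ (Fin d), L ⊆ ⋃ n, y n +ᵥ ν n • K := by
  classical
  set M := K ∩ -K with hM
  have hMcomp : IsCompact M := hKcomp.inter_right hKcomp.neg.isClosed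
  have hMconv : Convex ℝ M := hKconv.inter hKconv.neg
  have hMsymm : -M = M := by
    ext z
    simp only [hM, Set.mem_neg, Set.mem_inter_iff, Set.mem_neg, neg_neg]
    tauto
  have hM0int : (0 : EuclideanSpace ℝ (Fin d)) ∈ interior M := by
    rw [hM, interior_inter]
    refine ⟨ho, ?_⟩
    have : interior (-K) = -interior K := by
      have h := (Homeomorph.neg (EuclideanSpace ℝ (Fin d))).image_interior K
      have h1 : (Homeomorph.neg (EuclideanSpace ℝ (Fin d))) '' K = -K := by
        ext z; simp [Set.mem_neg]
      have h2 : (Homeomorph.neg (EuclideanSpace ℝ (Fin d))) '' interior K = -interior K := by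
        ext z; simp [Set.mem_neg]
      rw [h1] at h
      rw [← h, h2]
    rw [this]
    simpa using ho
  have hM0 : (0 : EuclideanSpace ℝ (Fin d)) ∈ M := interior_subset hM0int
  have hMK : M ⊆ K := Set.inter_subset_left
  have hMvolpos : 0 < volume M :=
    lt_of_lt_of_le (isOpen_interior.measure_pos volume ⟨0, hM0int⟩) (measure_mono interior_subset)
  set y := Stmt16Aux.greedy L K ν with hy
  set U := Stmt16Aux.Unc L K ν with hU
  by_cases hterm : ∃ N, ¬(U N).Nonempty
  · obtain ⟨N, hN⟩ := hterm
    rw [Set.not_nonempty_iff_eq_empty] at hN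
    refine ⟨y, ?_⟩
    have hcov : L ⊆ ⋃ j ∈ Finset.range N, (y j +ᵥ ν j • K) := by
      rw [← Set.diff_eq_empty]
      exact hN
    refine hcov.trans ?_
    exact Set.iUnion₂_subset fun j _ => Set.subset_iUnion (fun n => y n +ᵥ ν n • K) j
  push_neg at hterm
  exfalso
  -- greedy never terminates; derive contradiction
  have hyU : ∀ n, y n ∈ U n := fun n => Stmt16Aux.greedy_mem L K ν n (hterm n)
  set a : ℕ → ℝ := fun n => ν n / 2 with ha
  have hapos : ∀ n, 0 < a n := fun n => by
    simp only [ha]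
    have := hνpos n
    positivity
  have haanti : Antitone a := fun m n h => by
    simp only [ha]
    linarith [hνanti h]
  have ha0 : Filter.Tendsto a Filter.atTop (nhds 0) := by
    have := hν0.div_const 2
    simpa using this
  set C : ℕ → Set (EuclideanSpace ℝ (Fin d)) := fun n => closure (U n) with hC
  have hUsubL : ∀ n, U n ⊆ L := fun n => Set.diff_subset
  have hCsubL : ∀ n, C n ⊆ L := fun n => closure_minimal (hUsubL n) hLcomp.isClosed
  have hCcomp : ∀ n, IsCompact (C n) := fun n =>
    hLcomp.of_isClosed_subset isClosed_closure (hCsubL n)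
  have hCne : ∀ n, (C n).Nonempty := fun n => (hterm n).closure
  have hUmono : ∀ n, U (n+1) ⊆ U n := by
    intro n
    apply Set.diff_subset_diff_right
    refine Set.iUnion₂_subset fun j hj => ?_
    have : j ∈ Finset.range (n+1) :=
      Finset.mem_range.mpr (Nat.lt_succ_of_lt (Finset.mem_range.mp hj))
    exact Set.subset_iUnion₂ (s := fun j _ => y j +ᵥ ν j • K) j this
  have hCmono : ∀ n, C (n+1) ⊆ C n := fun n => closure_mono (hUmono n)
  have hUK : ∀ n, U (n+1) ∩ (y n +ᵥ ν n • K) = ∅ := by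
    intro n
    rw [Set.eq_empty_iff_forall_notMem]
    rintro z ⟨⟨hzL, hz2⟩, hzv⟩
    exact hz2 (Set.mem_biUnion (Finset.mem_range.mpr (Nat.lt_succ_self n)) hzv)
  set W : ℕ → ENNReal := fun n => volume (C n + a n • M) with hW
  have hWfin : ∀ n, W n < ⊤ := fun n =>
    ((hCcomp n).add (hMcomp.smul (a n))).measure_lt_top
  have step : ∀ n, W (n+1) + ENNReal.ofReal (a n ^ d) * volume M
      + ENNReal.ofReal ((a n - a (n+1)) ^ d) * volume M / 2 ≤ W n := by
    intro n
    set δ := a n - a (n+1) with hδdef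
    have hδ : 0 ≤ δ := sub_nonneg.mpr (haanti (Nat.le_succ n))
    set A' := C (n+1) + a (n+1) • M with hA'
    have hA'comp : IsCompact A' := (hCcomp (n+1)).add (hMcomp.smul _)
    have hA'ne : A'.Nonempty := (hCne (n+1)).add ((Set.Nonempty.smul_set ⟨0, hM0⟩))
    have G := gain_lemma hd M hMcomp hMconv hMsymm hM0 A' hA'comp hA'ne δ hδ
    have hEq : A' + δ • M = C (n+1) + a n • M := by
      rw [hA', add_assoc, ← hMconv.add_smul (le_of_lt (hapos (n+1))) hδ]
      congr 2
      simp [hδdef]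
    rw [hEq] at G
    -- G : W (n+1) + ofReal(δ^d) * volM / 2 ≤ volume (C (n+1) + a n • M)
    set D := y n +ᵥ interior (a n • M) with hD
    have hDopen : IsOpen D := by
      have h := (Homeomorph.addLeft (y n)).isOpenMap (interior (a n • M)) isOpen_interior
      have heq : (Homeomorph.addLeft (y n)) '' interior (a n • M) = D := by
        ext z
        constructor
        · rintro ⟨w, hw, rfl⟩
          exact ⟨w, hw, rfl⟩
        · rintro ⟨w, hw, rfl⟩
          exact ⟨w, hw, rfl⟩
      rwa [heq] at h
    have hDvol : volume D = ENNReal.ofReal (a n ^ d) * volume M := by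
      have h1 : volume D = volume (interior (a n • M)) := by
        rw [hD]
        simpa using measure_vadd (y n) volume (interior (a n • M))
      have h2 : volume (interior (a n • M)) = volume (a n • M) := by
        apply le_antisymm (measure_mono interior_subset)
        have hsub : a n • M ⊆ interior (a n • M) ∪ frontier (a n • M) := by
          intro z hz
          have : z ∈ closure (a n • M) := subset_closure hz
          rw [closure_eq_interior_union_frontier] at this
          exact this
        calc volume (a n • M) ≤ volume (interior (a n • M) ∪ frontier (a n • M)) :=
              measure_mono hsub
          _ ≤ volume (interior (a n • M)) + volume (frontier (a n • M)) := measure_union_le _ _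
          _ = volume (interior (a n • M)) := by
              rw [(hMconv.smul (a n)).addHaar_frontier volume, add_zero]
      rw [h1, h2, Measure.addHaar_smul, finrank_euclideanSpace_fin,
        abs_of_nonneg (pow_nonneg (le_of_lt (hapos n)) d)]
    have hsub1 : C (n+1) + a n • M ⊆ C n + a n • M :=
      Set.add_subset_add_right (hCmono n)
    have hsub2 : D ⊆ C n + a n • M := by
      rintro z hz
      rw [hD, Set.mem_vadd_set_iff_neg_vadd_mem] at hz
      have : z = y n + (-y n +ᵥ z) := by simp [vadd_eq_add]
      rw [this]
      exact Set.add_mem_add (subset_closure (hyU n)) (interior_subset hz)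
    have hdisj : Disjoint (C (n+1) + a n • M) D := by
      rw [Set.disjoint_left]
      rintro z ⟨u, hu, v, hv, rfl⟩ hzD
      rw [hD, Set.mem_vadd_set_iff_neg_vadd_mem] at hzD
      set w := -y n +ᵥ (u + v) with hw
      have hwmem : w ∈ interior (a n • M) := hzD
      -- u = y n + (w - v) ∈ y n +ᵥ (interior (a n • M) + a n • M)
      have hvneg : -v ∈ a n • M := by
        have : -v ∈ -(a n • M) := Set.neg_mem_neg.mpr hv
        rwa [← Set.smul_set_neg, hMsymm] at this
      set O := interior (a n • M) + a n • M with hO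
      have hOopen : IsOpen O := isOpen_interior.add_right
      have huO : u ∈ y n +ᵥ O := by
        rw [Set.mem_vadd_set_iff_neg_vadd_mem]
        have : -y n +ᵥ u = w + (-v) := by
          simp only [hw, vadd_eq_add]
          abel
        rw [this]
        exact Set.add_mem_add hwmem hvneg
      have hOsub : y n +ᵥ O ⊆ y n +ᵥ ν n • K := by
        apply Set.vadd_set_mono
        rw [hO]
        calc interior (a n • M) + a n • M ⊆ a n • M + a n • M :=
              Set.add_subset_add_right interior_subset
          _ = (a n + a n) • M := (hMconv.add_smul (le_of_lt (hapos n)) (le_of_lt (hapos n))).symm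
          _ = ν n • M := by norm_num [ha]
          _ ⊆ ν n • K := Set.smul_set_mono hMK
      have hOU : (y n +ᵥ O) ∩ U (n+1) = ∅ := by
        rw [Set.eq_empty_iff_forall_notMem]
        rintro z ⟨hz1, hz2⟩
        have : z ∈ U (n+1) ∩ (y n +ᵥ ν n • K) := ⟨hz2, hOsub hz1⟩
        rw [hUK n] at this
        exact this
      have hCU : C (n+1) ⊆ (y n +ᵥ O)ᶜ := by
        show closure (U (n+1)) ⊆ (y n +ᵥ O)ᶜ
        apply closure_minimal _ (hOopen.vadd (y n)).isClosed_compl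
        · intro z hz hzO
          have : z ∈ (y n +ᵥ O) ∩ U (n+1) := ⟨hzO, hz⟩
          rw [hOU] at this
          exact this
      exact (hCU hu) huO
    have hmeas : volume ((C (n+1) + a n • M) ∪ D)
        = volume (C (n+1) + a n • M) + volume D :=
      measure_union hdisj hDopen.measurableSet
    have hfinal : volume (C (n+1) + a n • M) + volume D ≤ W n := by
      rw [← hmeas]
      exact measure_mono (Set.union_subset hsub1 hsub2)
    calc W (n+1) + ENNReal.ofReal (a n ^ d) * volume M
          + ENNReal.ofReal (δ ^ d) * volume M / 2
        = (W (n+1) + ENNReal.ofReal (δ ^ d) * volume M / 2)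
          + ENNReal.ofReal (a n ^ d) * volume M := by ring
      _ ≤ volume (C (n+1) + a n • M) + volume D := by
          rw [hDvol]
          exact add_le_add_left G _
      _ ≤ W n := hfinal
  set t : ℕ → ENNReal := fun n => ENNReal.ofReal (a n ^ d) * volume M
      + ENNReal.ofReal ((a n - a (n+1)) ^ d) * volume M / 2 with ht
  have htel : ∀ N, (∑ n ∈ Finset.range N, t n) + W N ≤ W 0 := by
    intro N
    induction N with
    | zero => simp
    | succ N ih =>
      rw [Finset.sum_range_succ]
      calc (∑ n ∈ Finset.range N, t n) + t N + W (N+1)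
          = (∑ n ∈ Finset.range N, t n) + (W (N+1) + ENNReal.ofReal (a N ^ d) * volume M
              + ENNReal.ofReal ((a N - a (N+1)) ^ d) * volume M / 2) := by
            rw [ht]; ring
        _ ≤ (∑ n ∈ Finset.range N, t n) + W N := add_le_add_right (step N) _
        _ ≤ W 0 := ih
  have htsum : ∑' n, t n ≤ W 0 := by
    rw [ENNReal.tsum_eq_iSup_nat]
    exact iSup_le fun N => le_trans (le_add_right (le_refl _)) (htel N)
  have hW0 : W 0 = volume (L + (ν 0 / 2) • M) := by
    have hU0 : U 0 = L := by
      simp [hU, Stmt16Aux.Unc]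
    show volume (closure (U 0) + a 0 • M) = _
    rw [hU0, hLcomp.isClosed.closure_eq]
  set T : ENNReal := (∑' n, ENNReal.ofReal (a n ^ d)) * volume M with hT
  set G : ENNReal := (∑' n, ENNReal.ofReal ((a n - a (n+1)) ^ d)) * volume M / 2 with hG
  have hsplit : ∑' n, t n = T + G := by
    rw [ht, ENNReal.tsum_add, hT, hG]
    congr 1
    · exact ENNReal.tsum_mul_right
    · simp only [div_eq_mul_inv, mul_assoc]
      rw [ENNReal.tsum_mul_right]
  have hWT : W 0 ≤ T := by
    rw [hW0, hT]
    exact hsum'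
  have hTG : T + G ≤ T := by
    rw [← hsplit]
    exact htsum.trans hWT
  have hTfin : T ≠ ⊤ := by
    have h1 : T ≤ W 0 := le_trans (le_add_right (le_refl T)) (hsplit ▸ htsum)
    exact (lt_of_le_of_lt h1 (hWfin 0)).ne
  have hG0 : G = 0 := by
    by_contra hGne
    exact absurd hTG (not_le.mpr (ENNReal.lt_add_right hTfin hGne))
  have hδsum : (∑' n, ENNReal.ofReal ((a n - a (n+1)) ^ d)) = 0 := by
    rw [hG, div_eq_mul_inv] at hG0
    rcases mul_eq_zero.mp hG0 with h | h
    · rcases mul_eq_zero.mp h with h2 | h2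
      · exact h2
      · exact absurd h2 hMvolpos.ne'
    · exact absurd h (ENNReal.inv_ne_zero.mpr (by norm_num))
  have hδ0 : ∀ n, a (n+1) = a n := by
    intro n
    have h1 := ENNReal.tsum_eq_zero.mp hδsum n
    rw [ENNReal.ofReal_eq_zero] at h1
    have h2 : 0 ≤ a n - a (n+1) := sub_nonneg.mpr (haanti (Nat.le_succ n))
    have h3 : (a n - a (n+1)) ^ d = 0 := le_antisymm h1 (pow_nonneg h2 d)
    have h4 : a n - a (n+1) = 0 := by
      rcases pow_eq_zero_iff hd.ne' |>.mp h3 with h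
      exact h
    linarith
  have hconst : ∀ n, a n = a 0 := by
    intro n
    induction n with
    | zero => rfl
    | succ n ih => rw [hδ0 n, ih]
  have hlim : (fun _ : ℕ => a 0) = a := by
    funext n
    exact (hconst n).symm
  have : a 0 = 0 := by
    apply tendsto_nhds_unique _ ha0
    rw [← hlim]
    exact tendsto_const_nhds
  exact absurd this (hapos 0).ne'


theorem stmt16 (d : ℕ) (hd : 0 < d) (K L : Set (EuclideanSpace ℝ (Fin d)))
    (hKcomp : IsCompact K) (hKconv : Convex ℝ K) (hKint : (interior K).Nonempty)
    (hLcomp : IsCompact L) (hLconv : Convex ℝ L) (hLint : (interior L).Nonempty)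
    (ho : (0 : EuclideanSpace ℝ (Fin d)) ∈ interior K)
    (lam : ℕ → ℝ) (hpos : ∀ i, 0 < lam i) (hle : ∀ i, lam i ≤ lam 0) (h1 : lam 0 < 1)
    (hsum : 2 ^ d * volume (L + (lam 0 / 2) • (K ∩ -K)) / volume (K ∩ -K) ≤
        ∑' i, ENNReal.ofReal (lam i ^ d)) :
    ∃ x : ℕ → EuclideanSpace ℝ (Fin d), L ⊆ ⋃ i, x i +ᵥ lam i • K := by
  classical
  have hLne : L.Nonempty := ⟨hLint.choose, interior_subset hLint.choose_spec⟩
  obtain ⟨r, hr, hball⟩ : ∃ r > 0, Metric.ball (0 : EuclideanSpace ℝ (Fin d)) r ⊆ K := by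
    obtain ⟨r, hr, h⟩ := Metric.isOpen_iff.mp isOpen_interior 0 ho
    exact ⟨r, hr, h.trans interior_subset⟩
  by_cases hcase : ∃ ε, 0 < ε ∧ {i | ε ≤ lam i}.Infinite
  · obtain ⟨ε, hε, hS⟩ := hcase
    exact caseA K L lam hpos hLne r hr hball ε hε hS
  push_neg at hcase
  have hfin : ∀ ε, 0 < ε → {i | ε ≤ lam i}.Finite := by
    intro ε hε
    rw [← Set.not_infinite]
    exact Set.not_infinite.mpr (hcase ε hε)
  obtain ⟨σ, hσanti⟩ := exists_sorted lam hpos hfin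
  set ν : ℕ → ℝ := lam ∘ σ with hν
  have hνpos : ∀ n, 0 < ν n := fun n => hpos (σ n)
  have hν0lam : ν 0 = lam 0 := by
    obtain ⟨m, hm⟩ := σ.surjective 0
    have h1' : ν m ≤ ν 0 := hσanti (Nat.zero_le m)
    have h2' : ν m = lam 0 := by rw [hν]; simp [hm]
    have h3' : ν 0 ≤ lam 0 := hle (σ 0)
    linarith
  have hν0 : Filter.Tendsto ν Filter.atTop (nhds 0) := by
    rw [Metric.tendsto_atTop]
    intro ε hε
    have hfin2 : {n | ε ≤ ν n}.Finite := by
      have : {n | ε ≤ ν n} = σ ⁻¹' {i | ε ≤ lam i} := rfl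
      rw [this]
      exact (hfin ε hε).preimage σ.injective.injOn
    obtain ⟨N, hN⟩ := hfin2.bddAbove
    refine ⟨N + 1, fun n hn => ?_⟩
    have hnot : n ∉ {n | ε ≤ ν n} := by
      intro hmem
      have := hN hmem
      omega
    rw [Set.mem_setOf_eq, not_le] at hnot
    rw [Real.dist_eq, sub_zero, abs_of_pos (hνpos n)]
    exact hnot
  -- transfer the sum hypothesis
  set M := K ∩ -K with hM
  have hMcomp : IsCompact M := hKcomp.inter_right hKcomp.neg.isClosed
  have hM0int : (0 : EuclideanSpace ℝ (Fin d)) ∈ interior M := by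
    rw [hM, interior_inter]
    refine ⟨ho, ?_⟩
    have hint : interior (-K) = -interior K := by
      have h := (Homeomorph.neg (EuclideanSpace ℝ (Fin d))).image_interior K
      have h1' : (Homeomorph.neg (EuclideanSpace ℝ (Fin d))) '' K = -K := by
        ext z; simp [Set.mem_neg]
      have h2' : (Homeomorph.neg (EuclideanSpace ℝ (Fin d))) '' interior K = -interior K := by
        ext z; simp [Set.mem_neg]
      rw [h1'] at h
      rw [← h, h2']
    rw [hint]
    simpa using ho
  have hMvolpos : 0 < volume M :=
    lt_of_lt_of_le (isOpen_interior.measure_pos volume ⟨0, hM0int⟩) (measure_mono interior_subset)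
  have hMvolfin : volume M ≠ ⊤ := hMcomp.measure_lt_top.ne
  have hS2 : ∑' n, ENNReal.ofReal ((ν n / 2) ^ d)
      = (∑' i, ENNReal.ofReal (lam i ^ d)) / 2 ^ d := by
    have heach : ∀ n, ENNReal.ofReal ((ν n / 2) ^ d) = ENNReal.ofReal (ν n ^ d) / 2 ^ d := by
      intro n
      rw [div_pow, ENNReal.ofReal_div_of_pos (by positivity)]
      congr 1
      rw [ENNReal.ofReal_pow (by norm_num)]
      norm_num
    calc ∑' n, ENNReal.ofReal ((ν n / 2) ^ d)
        = ∑' n, ENNReal.ofReal (ν n ^ d) / 2 ^ d := by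
          exact tsum_congr heach
      _ = (∑' n, ENNReal.ofReal (ν n ^ d)) / 2 ^ d := by
          simp only [div_eq_mul_inv]
          exact ENNReal.tsum_mul_right
      _ = (∑' i, ENNReal.ofReal (lam i ^ d)) / 2 ^ d := by
          congr 1
          exact σ.tsum_eq (fun i => ENNReal.ofReal (lam i ^ d))
  have hsum' : volume (L + (ν 0 / 2) • M) ≤
      (∑' n, ENNReal.ofReal ((ν n / 2) ^ d)) * volume M := by
    rw [hν0lam, hS2]
    set S := ∑' i, ENNReal.ofReal (lam i ^ d) with hSdef
    set Evol := volume (L + (lam 0 / 2) • M) with hE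
    have h2d0 : (2 : ENNReal) ^ d ≠ 0 := by positivity
    have h2dt : (2 : ENNReal) ^ d ≠ ⊤ := by
      exact ENNReal.pow_ne_top (by norm_num)
    have step1 : 2 ^ d * Evol ≤ S * volume M :=
      (ENNReal.div_le_iff_le_mul (Or.inl hMvolpos.ne') (Or.inl hMvolfin)).mp hsum
    have step2 : Evol ≤ S * volume M / 2 ^ d := by
      rw [ENNReal.le_div_iff_mul_le (Or.inl h2d0) (Or.inl h2dt), mul_comm]
      exact step1
    calc Evol ≤ S * volume M / 2 ^ d := step2
      _ = S / 2 ^ d * volume M := by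
          rw [div_eq_mul_inv, div_eq_mul_inv, mul_right_comm]
  obtain ⟨y, hy⟩ := caseB hd K L hKcomp hKconv hLcomp ho ν hνpos hσanti hν0 hsum'
  refine ⟨y ∘ σ.symm, ?_⟩
  refine hy.trans ?_
  refine Set.iUnion_subset fun n => ?_
  have : (y ∘ σ.symm) (σ n) = y n := by simp
  refine Set.subset_iUnion_of_subset (σ n) ?_
  rw [this]
  exact subset_rfl

end Stmt16Proof
end
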